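/- arXiv:2208.08152 — 5 statements merged into one kernel-verified Lean document; each statement's English description precedes it below -/
import Mathlib

section
/- Let n ∈ ℕ and let φ:[0,∞)→[0,∞) be a continuous increasing function with φ(0)=0 and liminf_{r→0⁺} φ(r)/r^n > 0. Then there exist a continuous increasing function φ°:[0,∞)→[0,∞) with φ°(0)=0 and φ°(r)/r^n non-increasing on (0,∞), and a positive constant c depending only on n, such that c·H^φ_δ(E) ≤ H^{φ°}_δ(E) ≤ H^φ_δ(E) for every δ ∈ (0,∞] and every set E ⊂ ℝ^n. -/
open MeasureTheory Filter Set Topology ENNReal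

noncomputable section

/-- Euclidean space `ℝ^n`. -/
abbrev En (n : ℕ) := EuclideanSpace ℝ (Fin n)

/-! ### Young functions, conditions (C) and (C₀), and the function `B` -/

/-- A (finite-valued) Young function: a convex function on `[0,∞)` vanishing at `0`,
nonnegative and not identically `0` on `(0,∞)`. -/
structure IsYoung (A : ℝ → ℝ) : Prop where
  convexOn : ConvexOn ℝ (Set.Ici 0) A
  zero : A 0 = 0
  nonneg : ∀ t, 0 ≤ t → 0 ≤ A t
  nontrivial : ∃ t, 0 < t ∧ 0 < A t

/-- The Young conjugate `Ã(t) = sup {τ t - A(τ) : τ ≥ 0}`. -/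
def youngConj (A : ℝ → ℝ) (t : ℝ) : ℝ :=
  sSup ((fun τ => τ * t - A τ) '' Set.Ici 0)

/-- The conjugate exponent `n' = n/(n-1)`. -/
def conjExp (n : ℕ) : ℝ := n / ((n : ℝ) - 1)

/-- The Young function `B` associated with `A` and the dimension `n`:
`B = A` if `n = 1`, and `B` is the Young conjugate of
`t ↦ t^{n'} ∫_t^∞ Ã(s) s^{-1-n'} ds` if `n ≥ 2`. -/
def Bfun (n : ℕ) (A : ℝ → ℝ) : ℝ → ℝ :=
  if n = 1 then A
  else youngConj fun t =>
    t ^ conjExp n * ∫ s in Set.Ioi t, youngConj A s / s ^ (1 + conjExp n)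

/-- Condition (C): `lim_{t→∞} t/A(t) = 0` if `n = 1`;
`∫^∞ (t/A(t))^{1/(n-1)} dt < ∞` if `n ≥ 2`. -/
def CondC (n : ℕ) (A : ℝ → ℝ) : Prop :=
  if n = 1 then Tendsto (fun t => t / A t) atTop (𝓝 0)
  else ∃ t₀ : ℝ, 0 < t₀ ∧
    IntegrableOn (fun t => (t / A t) ^ (1 / ((n : ℝ) - 1))) (Set.Ioi t₀) volume

/-- Condition (C₀): `0 < A(t) < ∞` for `t > 0` (finiteness is built into `A : ℝ → ℝ`),
and `lim_{t→0⁺} t/A(t) = ∞` if `n = 1`; `∫_0 (t/A(t))^{1/(n-1)} dt = ∞` if `n ≥ 2`. -/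
def CondC0 (n : ℕ) (A : ℝ → ℝ) : Prop :=
  (∀ t, 0 < t → 0 < A t) ∧
  (if n = 1 then Tendsto (fun t => t / A t) (𝓝[>] (0:ℝ)) atTop
   else ∀ ε : ℝ, 0 < ε →
     ¬ IntegrableOn (fun t => (t / A t) ^ (1 / ((n : ℝ) - 1))) (Set.Ioo 0 ε) volume)

/-! ### Gauge functions and generalized Hausdorff measures -/

/-- A gauge function in dimension `n`: continuous, increasing, vanishing (only) at `0`,
with `φ(r)/rⁿ` non-increasing on `(0,∞)`. -/
structure IsGauge (n : ℕ) (φ : ℝ → ℝ) : Prop where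
  continuousOn : ContinuousOn φ (Set.Ici 0)
  strictMonoOn : StrictMonoOn φ (Set.Ici 0)
  zero : φ 0 = 0
  ratio_antitone : AntitoneOn (fun r => φ r / r ^ n) (Set.Ioi 0)

/-- A gauge function: continuous, increasing, vanishing (only) at `0`. -/
structure IsGaugeWeak (φ : ℝ → ℝ) : Prop where
  continuousOn : ContinuousOn φ (Set.Ici 0)
  strictMonoOn : StrictMonoOn φ (Set.Ici 0)
  zero : φ 0 = 0

/-- The gauge `φ` evaluated on an extended-real diameter. -/
def gaugeOf (φ : ℝ → ℝ) (d : ℝ≥0∞) : ℝ≥0∞ :=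
  if d = ∞ then ∞ else ENNReal.ofReal (φ d.toReal)

/-- The pre-measure `H^φ_σ(E) = inf {∑ φ(diam Eᵢ) : E ⊆ ⋃ Eᵢ, diam Eᵢ ≤ σ}`. -/
def hPre {n : ℕ} (φ : ℝ → ℝ) (σ : ℝ≥0∞) (E : Set (En n)) : ℝ≥0∞ :=
  ⨅ (c : ℕ → Set (En n)) (_ : E ⊆ ⋃ i, c i) (_ : ∀ i, EMetric.diam (c i) ≤ σ),
    ∑' i, gaugeOf φ (EMetric.diam (c i))

/-- The generalized Hausdorff measure `H^φ(E) = lim_{σ→0⁺} H^φ_σ(E)`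
(the limit equals the supremum, by monotonicity in `σ`). -/
def hMeasure {n : ℕ} (φ : ℝ → ℝ) (E : Set (En n)) : ℝ≥0∞ :=
  ⨆ (σ : ℝ≥0∞) (_ : 0 < σ), hPre φ σ E

/-- The Hausdorff content `H^φ_∞`. -/
def hContent {n : ℕ} (φ : ℝ → ℝ) (E : Set (En n)) : ℝ≥0∞ :=
  hPre φ ∞ E

/-! ### Weak gradients and Orlicz–Sobolev membership -/

/-- `du` is the weak gradient of `u` on the open set `Ω` (integration by parts against
smooth compactly supported test functions), with `u` and `du` locally integrable on `Ω`. -/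
def HasWeakGradientOn {n : ℕ} {F : Type*} [NormedAddCommGroup F] [NormedSpace ℝ F]
    (u : En n → F) (du : En n → En n →L[ℝ] F) (Ω : Set (En n)) : Prop :=
  LocallyIntegrableOn u Ω volume ∧ LocallyIntegrableOn du Ω volume ∧
  ∀ η : En n → ℝ, ContDiff ℝ (⊤ : ℕ∞) η → HasCompactSupport η → tsupport η ⊆ Ω →
    ∀ v : En n, ∫ x in Ω, fderiv ℝ η x v • u x = - ∫ x in Ω, η x • du x v

/-- The integral `∫_Ω A(|f|/l) dx` entering the definition of the Luxemburg norm. -/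
def orliczIntegral {n : ℕ} (A : ℝ → ℝ) (f : En n → ℝ) (Ω : Set (En n)) (l : ℝ) : ℝ≥0∞ :=
  ∫⁻ x in Ω, ENNReal.ofReal (A (|f x| / l)) ∂volume

/-- `f` belongs to the Orlicz space `L^A(Ω)` (finite Luxemburg norm). -/
def MemOrlicz {n : ℕ} (A : ℝ → ℝ) (f : En n → ℝ) (Ω : Set (En n)) : Prop :=
  ∃ l : ℝ, 0 < l ∧ orliczIntegral A f Ω l ≤ 1

/-- The Luxemburg norm `‖f‖_{L^A(Ω)}`. -/
def luxNorm {n : ℕ} (A : ℝ → ℝ) (f : En n → ℝ) (Ω : Set (En n)) : ℝ :=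
  sInf {l : ℝ | 0 < l ∧ orliczIntegral A f Ω l ≤ 1}

/-! ### The functions `J`, `ψ`, the scaling functions `Θ`, and related objects -/

/-- `J(s) = s · B⁻¹(φ(s)/sⁿ)` for `s > 0`, `J(0) = 0`; here `Binv` plays the role of `B⁻¹`. -/
def Jfun (n : ℕ) (Binv φ : ℝ → ℝ) (s : ℝ) : ℝ :=
  if s = 0 then 0 else s * Binv (φ s / s ^ n)

/-- The scaled version `J_r(s) = s · B⁻¹(r φ(s)/sⁿ)` for `s > 0`, `J_r(0) = 0`. -/
def Jr (n : ℕ) (Binv φ : ℝ → ℝ) (r s : ℝ) : ℝ :=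
  if s = 0 then 0 else s * Binv (r * φ s / s ^ n)

/-- `g` is the (nonnegative) inverse of `f` on `[0,∞)`. -/
def IsInvOn0 (f g : ℝ → ℝ) : Prop :=
  (∀ t, 0 ≤ t → 0 ≤ g t ∧ f (g t) = t) ∧ (∀ s, 0 ≤ s → g (f s) = s)

/-- `Θ_h^0(r) = limsup_{t→0⁺} h(rt)/h(t)`. -/
def Theta0 (h : ℝ → ℝ) (r : ℝ) : ℝ :=
  Filter.limsup (fun t => h (r * t) / h t) (𝓝[>] (0:ℝ))

/-- The `liminf` version of `Θ_h^0`. -/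
def Theta0star (h : ℝ → ℝ) (r : ℝ) : ℝ :=
  Filter.liminf (fun t => h (r * t) / h t) (𝓝[>] (0:ℝ))

/-- `Θ_h^∞(r) = limsup_{t→∞} h(rt)/h(t)`. -/
def ThetaInf (h : ℝ → ℝ) (r : ℝ) : ℝ :=
  Filter.limsup (fun t => h (r * t) / h t) atTop

/-- The `liminf` version of `Θ_h^∞`. -/
def ThetaInfstar (h : ℝ → ℝ) (r : ℝ) : ℝ :=
  Filter.liminf (fun t => h (r * t) / h t) atTop

/-- `Θ_h(r) = sup_{t>0} h(rt)/h(t)`. -/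
def ThetaSup (h : ℝ → ℝ) (r : ℝ) : ℝ :=
  sSup ((fun t => h (r * t) / h t) '' Set.Ioi 0)

/-- The `inf` version of `Θ_h`. -/
def ThetaSupstar (h : ℝ → ℝ) (r : ℝ) : ℝ :=
  sInf ((fun t => h (r * t) / h t) '' Set.Ioi 0)

/-- The right-hand limit `f(a⁺)` of a non-decreasing function: `inf_{r>a} f(r)`. -/
def rightLim (f : ℝ → ℝ) (a : ℝ) : ℝ := sInf (f '' Set.Ioi a)

/-- `Ξ_{ψ,B}(r) = r · Θ_ψ(Θ_{B⁻¹}(1/r)⁺)`. -/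
def XiR (ψ Binv : ℝ → ℝ) (r : ℝ) : ℝ :=
  r * rightLim (ThetaSup ψ) (ThetaSup Binv (1 / r))

/-- `Ξ_{ψ,B}` extended to `ℝ≥0∞` (by its supremum at `∞`). -/
def XiE (ψ Binv : ℝ → ℝ) (x : ℝ≥0∞) : ℝ≥0∞ :=
  if x = ∞ then ⨆ r : ℝ, ENNReal.ofReal (XiR ψ Binv r)
  else ENNReal.ofReal (XiR ψ Binv x.toReal)

/-- `Φ_B(r) = r · B⁻¹(1/r)ⁿ` for `r > 0`, `Φ_B(0) = 0`. -/
def PhiB (n : ℕ) (Binv : ℝ → ℝ) (r : ℝ) : ℝ :=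
  if r ≤ 0 then 0 else r * (Binv (1 / r)) ^ n

/-- `Φ_B` extended to `ℝ≥0∞` (by its supremum at `∞`). -/
def PhiBE (n : ℕ) (Binv : ℝ → ℝ) (x : ℝ≥0∞) : ℝ≥0∞ :=
  if x = ∞ then ⨆ r : ℝ, ENNReal.ofReal (PhiB n Binv r)
  else ENNReal.ofReal (PhiB n Binv x.toReal)

/-! ### Cubes, dyadic net measures, and the Morrey inequality -/

/-- An open cube with sides parallel to the coordinate axes. -/
def IsOpenCube {n : ℕ} (Q : Set (En n)) : Prop :=
  ∃ (a : Fin n → ℝ) (l : ℝ), 0 < l ∧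
    Q = {x : En n | ∀ i, x i ∈ Set.Ioo (a i) (a i + l)}

/-- A (closed) dyadic cube. -/
def IsDyadicCube {n : ℕ} (Q : Set (En n)) : Prop :=
  ∃ (j : ℤ) (k : Fin n → ℤ),
    Q = {x : En n | ∀ i, x i ∈ Set.Icc ((k i : ℝ) / 2 ^ j) (((k i : ℝ) + 1) / 2 ^ j)}

/-- The dyadic net pre-measure `Λ^φ_σ`. -/
def netPre {n : ℕ} (φ : ℝ → ℝ) (σ : ℝ≥0∞) (E : Set (En n)) : ℝ≥0∞ :=
  ⨅ (c : ℕ → Set (En n)) (_ : E ⊆ ⋃ i, c i) (_ : ∀ i, IsDyadicCube (c i))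
    (_ : ∀ i, EMetric.diam (c i) ≤ σ),
    ∑' i, gaugeOf φ (EMetric.diam (c i))

/-- The dyadic net measure `Λ^φ`. -/
def netMeasure {n : ℕ} (φ : ℝ → ℝ) (E : Set (En n)) : ℝ≥0∞ :=
  ⨆ (σ : ℝ≥0∞) (_ : 0 < σ), netPre φ σ E

/-- `cn` is a constant comparing generalized Hausdorff measures with dyadic net measures:
`H^g ≤ Λ^g ≤ cn · H^g` for every gauge `g`. -/
def NetComparison (n : ℕ) (cn : ℝ) : Prop :=
  0 < cn ∧ ∀ g : ℝ → ℝ, IsGauge n g → ∀ E : Set (En n),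
    hMeasure g E ≤ netMeasure g E ∧ netMeasure g E ≤ ENNReal.ofReal cn * hMeasure g E

/-- The Morrey-type inequality
`(diam Q)ⁿ/κ · B(diam u(Q)/(κ λ diam Q)) ≤ ∫_Q A(|∇u|/λ) dx`
for all open cubes `Q ⊆ Ω` and all `λ > 0` making the right-hand side finite. -/
def MorreyIneq {n m : ℕ} (A B : ℝ → ℝ) (κ : ℝ) (Ω : Set (En n))
    (u : En n → En m) (du : En n → En n →L[ℝ] En m) : Prop :=
  ∀ Q : Set (En n), IsOpenCube Q → Q ⊆ Ω → ∀ l : ℝ, 0 < l →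
    orliczIntegral A (fun x => ‖du x‖) Q l ≠ ∞ →
    ENNReal.ofReal ((Metric.diam Q) ^ n / κ *
        B (Metric.diam (u '' Q) / (κ * l * Metric.diam Q)))
      ≤ orliczIntegral A (fun x => ‖du x‖) Q l

end


namespace S11


variable (n : ℕ) (φ : ℝ → ℝ)

noncomputable def q (t : ℝ) : ℝ := φ t / t ^ n

noncomputable def m (r : ℝ) : ℝ := sInf (q n φ '' Set.Ioc 0 r)

noncomputable def phi' (r : ℝ) : ℝ := if r ≤ 0 then 0 else r ^ n * m n φ r

variable {n φ}
variable (hn : 0 < n) (hc : ContinuousOn φ (Set.Ici 0))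
  (hs : StrictMonoOn φ (Set.Ici 0)) (h0 : φ 0 = 0)

section basic
include hs h0

lemma phi_nonneg (t : ℝ) (ht : 0 ≤ t) : 0 ≤ φ t := by
  rcases eq_or_lt_of_le ht with h | h
  · rw [← h, h0]
  · exact le_of_lt (h0 ▸ hs Set.self_mem_Ici (le_of_lt h) h)

lemma phi_pos (t : ℝ) (ht : 0 < t) : 0 < φ t := h0 ▸ hs Set.self_mem_Ici (le_of_lt ht) ht

lemma q_nonneg (t : ℝ) (ht : 0 < t) : 0 ≤ q n φ t :=
  div_nonneg (phi_nonneg hs h0 t ht.le) (pow_nonneg ht.le n)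

lemma q_pos (t : ℝ) (ht : 0 < t) : 0 < q n φ t :=
  div_pos (phi_pos hs h0 t ht) (pow_pos ht n)

omit hs h0 in
include hc in
lemma q_continuousOn : ContinuousOn (q n φ) (Set.Ioi 0) := by
  apply ContinuousOn.div₀ (hc.mono (fun x (hx : x ∈ Set.Ioi (0:ℝ)) => Set.mem_Ici.mpr (le_of_lt hx)))
  · exact (continuous_pow n).continuousOn
  · intro x hx; exact ne_of_gt (pow_pos hx n)

lemma bdd (r : ℝ) : BddBelow (q n φ '' Set.Ioc 0 r) := by
  refine ⟨0, fun x hx => ?_⟩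
  rcases hx with ⟨t, ht, rfl⟩
  exact q_nonneg hs h0 t ht.1

omit hs h0 in
lemma ne_img {r : ℝ} (hr : 0 < r) : (q n φ '' Set.Ioc 0 r).Nonempty :=
  ⟨q n φ r, ⟨r, ⟨hr, le_rfl⟩, rfl⟩⟩

lemma m_le {t r : ℝ} (ht : 0 < t) (htr : t ≤ r) : m n φ r ≤ q n φ t :=
  csInf_le (bdd hs h0 r) ⟨t, ⟨ht, htr⟩, rfl⟩

omit hs h0 in
lemma le_m {b r : ℝ} (hr : 0 < r) (h : ∀ t ∈ Set.Ioc (0:ℝ) r, b ≤ q n φ t) : b ≤ m n φ r :=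
  le_csInf (ne_img hr) (fun _ ⟨t, ht, he⟩ => he ▸ h t ht)

lemma m_nonneg {r : ℝ} (hr : 0 < r) : 0 ≤ m n φ r :=
  le_m hr (fun t ht => q_nonneg hs h0 t ht.1)

lemma m_anti : AntitoneOn (m n φ) (Set.Ioi 0) := by
  intro r1 h1 r2 _ h12
  exact le_m h1 (fun t ht => m_le hs h0 ht.1 (ht.2.trans h12))

omit hs h0 in
lemma exists_lt_two_m {r : ℝ} (hr : 0 < r) (hm : 0 < m n φ r) :
    ∃ t, 0 < t ∧ t ≤ r ∧ q n φ t < 2 * m n φ r := by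
  have h2 : m n φ r < 2 * m n φ r := by linarith
  obtain ⟨x, ⟨t, ht, rfl⟩, hx⟩ := exists_lt_of_csInf_lt (ne_img hr) h2
  exact ⟨t, ht.1, ht.2, hx⟩

include hc in
lemma m_pos (ha : ∃ a : ℝ, 0 < a ∧ ∀ᶠ r in 𝓝[>] (0:ℝ), a ≤ φ r / r ^ n)
    {r : ℝ} (hr : 0 < r) : 0 < m n φ r := by
  obtain ⟨a, ha0, hev⟩ := ha
  obtain ⟨ε, hε, hball⟩ := Metric.eventually_nhds_iff.mp (eventually_nhdsWithin_iff.mp hev)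
  have hq : ∀ t : ℝ, 0 < t → t < ε → a ≤ q n φ t := by
    intro t ht htε
    have hd : dist t 0 < ε := by simpa [Real.dist_eq, abs_of_pos ht] using htε
    exact hball hd ht
  rcases lt_or_ge r ε with hrε | hεr
  · exact lt_of_lt_of_le ha0 (le_m hr fun t ht => hq t ht.1 (lt_of_le_of_lt ht.2 hrε))
  · have hne : (Set.Icc (ε/2) r).Nonempty := ⟨ε/2, le_rfl, by linarith⟩
    have hsub : Set.Icc (ε/2) r ⊆ Set.Ioi 0 := fun x hx => lt_of_lt_of_le (by linarith) hx.1
    obtain ⟨t₀, ht₀, hmin⟩ := isCompact_Icc.exists_isMinOn hne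
      ((q_continuousOn hc).mono hsub)
    have hq0 : 0 < q n φ t₀ := q_pos hs h0 t₀ (hsub ht₀)
    refine lt_of_lt_of_le (lt_min ha0 hq0) (le_m hr fun t ht => ?_)
    rcases lt_or_ge t ε with h | h
    · exact le_trans (min_le_left _ _) (hq t ht.1 h)
    · exact le_trans (min_le_right _ _) (hmin ⟨by linarith, ht.2⟩)

end basic

lemma phi'_zero : phi' n φ 0 = 0 := by simp [phi']

lemma phi'_of_pos {r : ℝ} (hr : 0 < r) : phi' n φ r = r ^ n * m n φ r := by
  simp [phi', not_le.mpr hr]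

include hs h0 in
lemma phi'_le_phi {r : ℝ} (hr : 0 ≤ r) : phi' n φ r ≤ φ r := by
  rcases eq_or_lt_of_le hr with h | h
  · simp [← h, phi'_zero, h0]
  · rw [phi'_of_pos h]
    have h1 : m n φ r ≤ q n φ r := m_le hs h0 h le_rfl
    have h2 : r ^ n * q n φ r = φ r := by
      rw [q]; field_simp
    calc r ^ n * m n φ r ≤ r ^ n * q n φ r :=
          mul_le_mul_of_nonneg_left h1 (pow_nonneg h.le n)
      _ = φ r := h2

include hs h0 in
lemma phi'_nonneg {r : ℝ} (hr : 0 ≤ r) : 0 ≤ phi' n φ r := by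
  rcases eq_or_lt_of_le hr with h | h
  · simp [← h, phi'_zero]
  · rw [phi'_of_pos h]
    exact mul_nonneg (pow_nonneg h.le n) (m_nonneg hs h0 h)

lemma phi'_pos (hm : ∀ r : ℝ, 0 < r → 0 < m n φ r) {r : ℝ} (hr : 0 < r) :
    0 < phi' n φ r := by
  rw [phi'_of_pos hr]; exact mul_pos (pow_pos hr n) (hm r hr)

include hn hs h0 in
lemma phi'_strictMono (hm : ∀ r : ℝ, 0 < r → 0 < m n φ r) :
    StrictMonoOn (phi' n φ) (Set.Ici 0) := by
  intro r1 h1 r2 _ h12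
  rcases eq_or_lt_of_le (show (0:ℝ) ≤ r1 from h1) with h | h
  · rw [← h, phi'_zero]
    exact phi'_pos hm (h ▸ h12)
  -- main case : 0 < r1 < r2
  set r3 := (r1 + r2) / 2 with hr3def
  have hr2 : (0:ℝ) < r2 := lt_trans h h12
  have hr3a : r1 < r3 := by rw [hr3def]; linarith
  have hr3b : r3 < r2 := by rw [hr3def]; linarith
  have hr3 : (0:ℝ) < r3 := lt_trans h hr3a
  set L := min (min ((r2/r3)^n * φ r1) (φ r3)) ((r2/r1)^n * phi' n φ r1) with hL
  have hφr1 : 0 < φ r1 := phi_pos hs h0 r1 h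
  have hLle : L ≤ phi' n φ r2 := by
    rw [phi'_of_pos hr2]
    rw [← div_le_iff₀' (pow_pos hr2 n)]
    refine le_m hr2 fun t ht => ?_
    rw [div_le_iff₀' (pow_pos hr2 n)]
    have ht0 : 0 < t := ht.1
    have hqt : r2 ^ n * q n φ t = (r2 / t) ^ n * φ t := by
      rw [q, div_pow]; field_simp
    rcases le_or_gt t r1 with hcase | hcase
    · have h1' : m n φ r1 ≤ q n φ t := m_le hs h0 ht0 hcase
      have h2' : (r2/r1)^n * (r1 ^ n * m n φ r1) ≤ (r2/r1)^n * (r1 ^ n * q n φ t) := by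
        apply mul_le_mul_of_nonneg_left _ (pow_nonneg (div_nonneg hr2.le h.le) n)
        exact mul_le_mul_of_nonneg_left h1' (pow_nonneg h.le n)
      have h3' : (r2/r1)^n * (r1 ^ n * q n φ t) = r2 ^ n * q n φ t := by
        rw [div_pow]; field_simp
      calc L ≤ (r2/r1)^n * phi' n φ r1 := min_le_right _ _
        _ = (r2/r1)^n * (r1 ^ n * m n φ r1) := by rw [phi'_of_pos h]
        _ ≤ r2 ^ n * q n φ t := h3' ▸ h2'
    · rcases le_or_gt t r3 with hcase2 | hcase2
      · have hb : (r2/r3)^n * φ r1 ≤ (r2/t)^n * φ t := by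
          apply mul_le_mul
          · exact pow_le_pow_left₀ (div_nonneg hr2.le hr3.le)
              (div_le_div_of_nonneg_left hr2.le ht0 hcase2) n
          · exact (hs h.le ht0.le hcase).le
          · exact hφr1.le
          · exact pow_nonneg (div_nonneg hr2.le ht0.le) n
        calc L ≤ (r2/r3)^n * φ r1 := le_trans (min_le_left _ _) (min_le_left _ _)
          _ ≤ (r2/t)^n * φ t := hb
          _ = r2 ^ n * q n φ t := hqt.symm
      · have hb : φ r3 ≤ (r2/t)^n * φ t := by
          have h1' : (1:ℝ) ≤ (r2/t)^n :=
            one_le_pow₀ ((one_le_div ht0).mpr ht.2)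
          have h2' : φ r3 ≤ φ t := (hs hr3.le ht0.le hcase2).le
          calc φ r3 ≤ φ t := h2'
            _ = 1 * φ t := (one_mul _).symm
            _ ≤ (r2/t)^n * φ t :=
              mul_le_mul_of_nonneg_right h1' (phi_nonneg hs h0 t ht0.le)
        calc L ≤ φ r3 := le_trans (min_le_left _ _) (min_le_right _ _)
          _ ≤ (r2/t)^n * φ t := hb
          _ = r2 ^ n * q n φ t := hqt.symm
  have hgt : phi' n φ r1 < L := by
    have hp1 : 0 < phi' n φ r1 := phi'_pos hm h
    have hle1 : phi' n φ r1 ≤ φ r1 := phi'_le_phi hs h0 h.le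
    refine lt_min (lt_min ?_ ?_) ?_
    · have hone : (1:ℝ) < (r2/r3)^n :=
        one_lt_pow₀ ((one_lt_div hr3).mpr hr3b) hn.ne'
      nlinarith
    · exact lt_of_le_of_lt hle1 (hs h.le (le_trans h.le hr3a.le) hr3a)
    · have hone : (1:ℝ) < (r2/r1)^n :=
        one_lt_pow₀ ((one_lt_div h).mpr h12) hn.ne'
      nlinarith
  exact lt_of_lt_of_le hgt hLle

include hs h0 in
lemma phi'_ratio_antitone : AntitoneOn (fun r => phi' n φ r / r ^ n) (Set.Ioi 0) := by
  intro r1 h1 r2 h2 h12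
  have e : ∀ r : ℝ, 0 < r → phi' n φ r / r ^ n = m n φ r := by
    intro r hr
    rw [phi'_of_pos hr]
    field_simp
  simp only []
  rw [e r1 h1, e r2 h2]
  exact m_anti hs h0 h1 h2 h12

include hc hs h0 in
lemma m_continuousAt {r : ℝ} (hr : 0 < r) : ContinuousAt (m n φ) r := by
  have hqc : ContinuousAt (q n φ) r :=
    (q_continuousOn hc).continuousAt (isOpen_Ioi.mem_nhds hr)
  rw [ContinuousAt]
  refine tendsto_order.2 ⟨?_, ?_⟩
  · -- ∀ b < m r, eventually b < m r'
    intro b hb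
    rcases lt_or_ge b 0 with hb0 | hb0
    · filter_upwards [Ioo_mem_nhds (by linarith : r/2 < r) (lt_add_one r)] with r' hr'
      exact lt_of_lt_of_le hb0 (m_nonneg hs h0 (by have := hr'.1; linarith))
    · set b2 := (b + m n φ r) / 2 with hb2
      have hb2a : b < b2 := by rw [hb2]; linarith
      have hb2b : b2 < m n φ r := by rw [hb2]; linarith
      have hqr : b2 < q n φ r := lt_of_lt_of_le hb2b (m_le hs h0 hr le_rfl)
      have hev : ∀ᶠ t in 𝓝 r, b2 < q n φ t := hqc.eventually (eventually_gt_nhds hqr)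
      obtain ⟨lu, hlu, hsub⟩ := (nhds_basis_Ioo r).eventually_iff.mp hev
      set l' := max lu.1 (r/2) with hl'
      have hl'r : l' < r := max_lt hlu.1 (by linarith)
      have hl'0 : 0 < l' := lt_of_lt_of_le (by linarith) (le_max_right _ _)
      filter_upwards [Ioo_mem_nhds hl'r hlu.2] with r' hr'
      have hr'0 : 0 < r' := lt_trans hl'0 hr'.1
      refine lt_of_lt_of_le hb2a (le_m hr'0 fun t ht => ?_)
      rcases le_or_gt t r with hcase | hcase
      · exact le_trans hb2b.le (m_le hs h0 ht.1 hcase)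
      · refine (hsub ⟨?_, ?_⟩).le
        · exact lt_trans (lt_of_le_of_lt (le_max_left _ _) hl'r) hcase
        · exact lt_of_le_of_lt ht.2 hr'.2
  · -- ∀ b > m r, eventually m r' < b
    intro b hb
    obtain ⟨x, ⟨t₀, ht₀, rfl⟩, hx⟩ := exists_lt_of_csInf_lt (ne_img hr) hb
    rcases lt_or_eq_of_le ht₀.2 with hlt | heq
    · filter_upwards [Ioi_mem_nhds hlt] with r' hr'
      exact lt_of_le_of_lt (m_le hs h0 ht₀.1 hr'.le) hx
    · -- t₀ = r
      have hqrb : q n φ r < b := heq ▸ hx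
      have hev : ∀ᶠ t in 𝓝 r, q n φ t < b := hqc.eventually (eventually_lt_nhds hqrb)
      obtain ⟨lu, hlu, hsub⟩ := (nhds_basis_Ioo r).eventually_iff.mp hev
      set t₁ := max ((lu.1 + r)/2) (r/2) with ht₁
      have ht₁l : lu.1 < t₁ := lt_of_lt_of_le (by have := hlu.1; linarith) (le_max_left _ _)
      have ht₁r : t₁ < r := max_lt (by have := hlu.1; linarith) (by linarith)
      have ht₁0 : 0 < t₁ := lt_of_lt_of_le (by linarith) (le_max_right _ _)
      have hq1 : q n φ t₁ < b := hsub ⟨ht₁l, ht₁r.trans hlu.2⟩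
      filter_upwards [Ioi_mem_nhds ht₁r] with r' hr'
      exact lt_of_le_of_lt (m_le hs h0 ht₁0 hr'.le) hq1

include hc hs h0 in
lemma phi'_continuousOn : ContinuousOn (phi' n φ) (Set.Ici 0) := by
  intro r hr
  rcases eq_or_lt_of_le (show (0:ℝ) ≤ r from hr) with h | h
  · subst h
    rw [ContinuousWithinAt, phi'_zero]
    have hφt : Tendsto φ (𝓝[Set.Ici 0] 0) (𝓝 0) := by
      have := hc 0 Set.self_mem_Ici
      rwa [ContinuousWithinAt, h0] at this
    refine tendsto_of_tendsto_of_tendsto_of_le_of_le' tendsto_const_nhds hφt ?_ ?_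
    · filter_upwards [self_mem_nhdsWithin] with t ht
      exact phi'_nonneg hs h0 ht
    · filter_upwards [self_mem_nhdsWithin] with t ht
      exact phi'_le_phi hs h0 ht
  · have hca : ContinuousAt (fun r => r ^ n * m n φ r) r :=
      (continuous_pow n).continuousAt.mul (m_continuousAt hc hs h0 h)
    refine (hca.congr ?_).continuousWithinAt
    filter_upwards [Ioi_mem_nhds h] with t ht
    exact (phi'_of_pos ht).symm



lemma coord_dist_le {n : ℕ} (x y : En n) (i : Fin n) : dist (x i) (y i) ≤ dist x y := by
  rw [EuclideanSpace.dist_eq]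
  have h1 : dist (x i) (y i) ^ 2 ≤ ∑ j, dist (x j) (y j) ^ 2 :=
    Finset.single_le_sum (f := fun j => dist (x j) (y j) ^ 2)
      (fun j _ => sq_nonneg _) (Finset.mem_univ i)
  calc dist (x i) (y i) = Real.sqrt (dist (x i) (y i) ^ 2) :=
        (Real.sqrt_sq dist_nonneg).symm
    _ ≤ _ := Real.sqrt_le_sqrt h1

lemma exists_cube_cover {n : ℕ} (hn : 0 < n) (S : Set (En n)) {t d : ℝ}
    (ht : 0 < t) (htd : t ≤ d) (hS : EMetric.diam S ≤ ENNReal.ofReal d) :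
    ∃ (k : ℕ) (Q : (Fin n → Fin k) → Set (En n)),
      S ⊆ ⋃ v, Q v ∧ (∀ v, EMetric.diam (Q v) ≤ ENNReal.ofReal t) ∧
      (k : ℝ) ≤ 3 * Real.sqrt n * (d / t) := by
  have hd : 0 < d := lt_of_lt_of_le ht htd
  have hsqn : (1:ℝ) ≤ Real.sqrt n := by
    rw [show (1:ℝ) = Real.sqrt 1 by simp]
    exact Real.sqrt_le_sqrt (by exact_mod_cast hn)
  have hdt1 : (1:ℝ) ≤ d / t := (one_le_div ht).mpr htd
  rcases S.eq_empty_or_nonempty with rfl | ⟨x₀, hx₀⟩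
  · refine ⟨0, fun _ => ∅, by simp, by simp [EMetric.diam], ?_⟩
    have : (0:ℝ) ≤ 3 * Real.sqrt n * (d / t) := by positivity
    simpa using this
  set k := ⌈2 * Real.sqrt n * d / t⌉₊ with hkdef
  have hk2 : (0:ℝ) < 2 * Real.sqrt n * d / t := by positivity
  have hk : 0 < k := Nat.ceil_pos.mpr hk2
  have hkR : (0:ℝ) < k := by exact_mod_cast hk
  have hkub : (k : ℝ) ≤ 3 * Real.sqrt n * (d / t) := by
    have h1 : (k : ℝ) < 2 * Real.sqrt n * d / t + 1 := Nat.ceil_lt_add_one hk2.le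
    have h2 : (1:ℝ) * 1 ≤ Real.sqrt n * (d / t) :=
      mul_le_mul hsqn hdt1 one_pos.le (by positivity)
    have h3 : 2 * Real.sqrt n * d / t = 2 * (Real.sqrt n * (d / t)) := by ring
    linarith
  have hklb : 2 * Real.sqrt n * d / t ≤ (k:ℝ) := Nat.le_ceil _
  set s := 2 * d / k with hsdef
  have hs0 : 0 < s := by positivity
  have hks : Real.sqrt n * s ≤ t := by
    rw [hsdef, mul_div_assoc', div_le_iff₀ hkR]
    rw [div_le_iff₀ ht] at hklb
    nlinarith
  set a : Fin n → ℝ := fun i => x₀ i - d with hadef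
  set Q : (Fin n → Fin k) → Set (En n) := fun v =>
    {x : En n | ∀ i, x i ∈ Set.Icc (a i + s * ((v i : ℕ) : ℝ))
      (a i + s * (((v i : ℕ) : ℝ) + 1))} with hQdef
  refine ⟨k, Q, ?_, ?_, hkub⟩
  · -- covering
    intro x hx
    have hdist : dist x x₀ ≤ d := by
      have h1 : edist x x₀ ≤ ENNReal.ofReal d :=
        le_trans (EMetric.edist_le_diam_of_mem hx hx₀) hS
      rw [edist_dist] at h1
      exact (ENNReal.ofReal_le_ofReal_iff hd.le).mp h1
    have hcoord : ∀ i, |x i - x₀ i| ≤ d := fun i => by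
      have := coord_dist_le x x₀ i
      rw [Real.dist_eq] at this
      exact this.trans hdist
    have hsk : s * k = 2 * d := by rw [hsdef]; field_simp
    set v : Fin n → Fin k := fun i =>
      ⟨min ⌊(x i - a i) / s⌋₊ (k - 1), lt_of_le_of_lt (min_le_right _ _) (Nat.sub_lt hk one_pos)⟩
      with hvdef
    refine Set.mem_iUnion.mpr ⟨v, fun i => ?_⟩
    have hu0 : 0 ≤ x i - a i := by
      have := abs_le.mp (hcoord i); rw [hadef]; simp only []; linarith [this.1]
    have hu2d : x i - a i ≤ 2 * d := by
      have := abs_le.mp (hcoord i); rw [hadef]; simp only []; linarith [this.2]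
    set u := x i - a i with hudef
    have hfl : (⌊u / s⌋₊ : ℝ) ≤ u / s := Nat.floor_le (by positivity)
    have hfl2 : u / s < ⌊u / s⌋₊ + 1 := Nat.lt_floor_add_one _
    rcases le_or_gt ⌊u / s⌋₊ (k - 1) with hNk | hNk
    · have hvi : ((v i : ℕ) : ℝ) = (⌊u / s⌋₊ : ℝ) := by
        rw [hvdef]; show ((min ⌊u / s⌋₊ (k - 1) : ℕ) : ℝ) = _; rw [min_eq_left hNk]
      constructor
      · rw [hvi]
        have : s * (⌊u / s⌋₊ : ℝ) ≤ u := by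
          rw [mul_comm, ← le_div_iff₀ hs0]; exact hfl
        rw [hudef] at this ⊢
        linarith
      · rw [hvi]
        have : u < s * ((⌊u / s⌋₊ : ℝ) + 1) := by
          rw [mul_comm, ← div_lt_iff₀ hs0]; exact hfl2
        rw [hudef] at this ⊢
        linarith
    · have hkN : (k : ℝ) ≤ ⌊u / s⌋₊ := by
        exact_mod_cast Nat.le_of_lt_succ (by omega : k < ⌊u/s⌋₊ + 1)
      have hvi : ((v i : ℕ) : ℝ) = ((k - 1 : ℕ) : ℝ) := by
        rw [hvdef]; show ((min ⌊u / s⌋₊ (k - 1) : ℕ) : ℝ) = _; rw [min_eq_right hNk.le]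
      have hcast : ((k - 1 : ℕ) : ℝ) = (k : ℝ) - 1 := by
        rw [Nat.cast_sub hk, Nat.cast_one]
      constructor
      · rw [hvi, hcast]
        have h1 : (k:ℝ) ≤ u / s := le_trans hkN hfl
        rw [le_div_iff₀ hs0] at h1
        nlinarith
      · rw [hvi, hcast]
        have : u ≤ 2 * d := hu2d
        nlinarith
  · -- diameter
    intro v
    refine EMetric.diam_le fun x hx y hy => ?_
    rw [edist_dist]
    refine ENNReal.ofReal_le_ofReal ?_
    have hcd : ∀ i, dist (x i) (y i) ≤ s := fun i => by
      have hxi := hx i; have hyi := hy i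
      rw [Real.dist_eq, abs_le]
      constructor <;> [linarith [hxi.1, hxi.2, hyi.1, hyi.2];
        linarith [hxi.1, hxi.2, hyi.1, hyi.2]]
    calc dist x y = Real.sqrt (∑ i, dist (x i) (y i) ^ 2) := EuclideanSpace.dist_eq x y
      _ ≤ Real.sqrt (∑ _i : Fin n, s ^ 2) := by
          apply Real.sqrt_le_sqrt
          exact Finset.sum_le_sum fun i _ => pow_le_pow_left₀ dist_nonneg (hcd i) 2
      _ = Real.sqrt n * s := by
          rw [Finset.sum_const, Finset.card_univ, Fintype.card_fin, nsmul_eq_mul,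
            Real.sqrt_mul (by positivity), Real.sqrt_sq hs0.le]
      _ ≤ t := hks


end S11

namespace S11

lemma gauge_zero {φ : ℝ → ℝ} (h0 : φ 0 = 0) : gaugeOf φ 0 = 0 := by
  simp [gaugeOf, h0]

lemma gauge_le_gauge {φ ψ : ℝ → ℝ} (h : ∀ r, 0 ≤ r → ψ r ≤ φ r) (d : ℝ≥0∞) :
    gaugeOf ψ d ≤ gaugeOf φ d := by
  rw [gaugeOf, gaugeOf]
  split_ifs with hd
  · exact le_rfl
  · exact ENNReal.ofReal_le_ofReal (h _ ENNReal.toReal_nonneg)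

lemma cover_cost {n : ℕ} (hn : 0 < n) (φ : ℝ → ℝ) (hmono : MonotoneOn φ (Set.Ici 0))
    (h0 : φ 0 = 0) (S : Set (En n)) {t d : ℝ} (ht : 0 < t) (htd : t ≤ d)
    (hS : EMetric.diam S ≤ ENNReal.ofReal d) :
    ∃ c' : ℕ → Set (En n), S ⊆ ⋃ j, c' j ∧ (∀ j, EMetric.diam (c' j) ≤ ENNReal.ofReal t) ∧
      ∑' j, gaugeOf φ (EMetric.diam (c' j)) ≤
        ENNReal.ofReal ((3 * Real.sqrt n * (d / t)) ^ n * φ t) := by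
  have hφt : 0 ≤ φ t := by
    have := hmono Set.self_mem_Ici ht.le ht.le
    rwa [h0] at this
  obtain ⟨k, Q, hcov, hdiam, hk⟩ := exists_cube_cover hn S ht htd hS
  set N := Fintype.card (Fin n → Fin k) with hN
  set e := Fintype.equivFin (Fin n → Fin k) with he
  set c' : ℕ → Set (En n) := fun j => if h : j < N then Q (e.symm ⟨j, h⟩) else ∅ with hc'
  have hterm0 : ∀ j, ¬ j < N → gaugeOf φ (EMetric.diam (c' j)) = 0 := fun j hj => by
    rw [hc']; simp only [dif_neg hj, EMetric.diam, Metric.ediam_empty]; exact gauge_zero h0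
  refine ⟨c', ?_, ?_, ?_⟩
  · intro x hx
    obtain ⟨v, hv⟩ := Set.mem_iUnion.mp (hcov hx)
    refine Set.mem_iUnion.mpr ⟨(e v : ℕ), ?_⟩
    rw [hc']; simp only [dif_pos (show (e v : ℕ) < N from (e v).isLt), Fin.eta, Equiv.symm_apply_apply]
    exact hv
  · intro j
    by_cases h : j < N
    · rw [hc']; simp only [dif_pos h]; exact hdiam _
    · rw [hc']; simp only [dif_neg h, EMetric.diam, Metric.ediam_empty]; exact zero_le
  · have hNcard : N = k ^ n := by
      rw [hN, Fintype.card_fun, Fintype.card_fin, Fintype.card_fin]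
    have hsum : ∑' j, gaugeOf φ (EMetric.diam (c' j))
        = ∑ j ∈ Finset.range N, gaugeOf φ (EMetric.diam (c' j)) :=
      tsum_eq_sum (fun j hj => hterm0 j (by simpa using hj))
    have hle : ∀ j ∈ Finset.range N,
        gaugeOf φ (EMetric.diam (c' j)) ≤ ENNReal.ofReal (φ t) := by
      intro j hj
      rw [Finset.mem_range] at hj
      have hd' : EMetric.diam (c' j) ≤ ENNReal.ofReal t := by
        rw [hc']; simp only [dif_pos hj]; exact hdiam _
      have hne : EMetric.diam (c' j) ≠ ⊤ :=
        ne_top_of_le_ne_top ENNReal.ofReal_ne_top hd'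
      rw [gaugeOf, if_neg hne]
      exact ENNReal.ofReal_le_ofReal
        (hmono ENNReal.toReal_nonneg ht.le (ENNReal.toReal_le_of_le_ofReal ht.le hd'))
    calc ∑' j, gaugeOf φ (EMetric.diam (c' j))
        = ∑ j ∈ Finset.range N, gaugeOf φ (EMetric.diam (c' j)) := hsum
      _ ≤ (Finset.range N).card • ENNReal.ofReal (φ t) :=
          Finset.sum_le_card_nsmul _ _ _ hle
      _ = (N : ℝ≥0∞) * ENNReal.ofReal (φ t) := by
          rw [Finset.card_range, nsmul_eq_mul]
      _ = ENNReal.ofReal ((N : ℝ) * φ t) := by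
          rw [ENNReal.ofReal_mul (by positivity), ENNReal.ofReal_natCast]
      _ ≤ ENNReal.ofReal ((3 * Real.sqrt n * (d / t)) ^ n * φ t) := by
          apply ENNReal.ofReal_le_ofReal
          apply mul_le_mul_of_nonneg_right _ hφt
          rw [hNcard]
          push_cast
          exact pow_le_pow_left₀ (by positivity) hk n

end S11


/-- Lemma `adamshedberg518`. -/
theorem statement11 (n : ℕ) (hn : 0 < n) :
    ∃ c : ℝ, 0 < c ∧
      ∀ φ : ℝ → ℝ, ContinuousOn φ (Set.Ici 0) → StrictMonoOn φ (Set.Ici 0) → φ 0 = 0 →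
        (∃ a : ℝ, 0 < a ∧ ∀ᶠ r in 𝓝[>] (0:ℝ), a ≤ φ r / r ^ n) →
        ∃ φ' : ℝ → ℝ, ContinuousOn φ' (Set.Ici 0) ∧ StrictMonoOn φ' (Set.Ici 0) ∧
          φ' 0 = 0 ∧ AntitoneOn (fun r => φ' r / r ^ n) (Set.Ioi 0) ∧
          ∀ δ : ℝ≥0∞, 0 < δ → ∀ E : Set (En n),
            ENNReal.ofReal c * hPre φ δ E ≤ hPre φ' δ E ∧ hPre φ' δ E ≤ hPre φ δ E := by
  have hsq : (0:ℝ) < Real.sqrt n := Real.sqrt_pos.mpr (by exact_mod_cast hn)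
  refine ⟨(2 * (3 * Real.sqrt n) ^ n)⁻¹, by positivity, ?_⟩
  intro φ hc hs h0 ha
  set K := 2 * (3 * Real.sqrt n) ^ n with hK
  have hK0 : 0 < K := by positivity
  have hm : ∀ r : ℝ, 0 < r → 0 < S11.m n φ r := fun r hr => S11.m_pos hc hs h0 ha hr
  refine ⟨S11.phi' n φ, S11.phi'_continuousOn hc hs h0, S11.phi'_strictMono hn hs h0 hm,
    S11.phi'_zero, S11.phi'_ratio_antitone hs h0, ?_⟩
  intro δ hδ E
  constructor
  · -- hard direction
    have key : ∀ c_ : ℕ → Set (En n), E ⊆ ⋃ i, c_ i → (∀ i, EMetric.diam (c_ i) ≤ δ) →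
        hPre φ δ E ≤ ENNReal.ofReal K * ∑' i, gaugeOf (S11.phi' n φ) (EMetric.diam (c_ i)) := by
      intro c_ hcov hdiam
      have H : ∀ i, ∃ cc : ℕ → Set (En n), c_ i ⊆ ⋃ j, cc j ∧
          (∀ j, EMetric.diam (cc j) ≤ δ) ∧
          ∑' j, gaugeOf φ (EMetric.diam (cc j)) ≤
            ENNReal.ofReal K * gaugeOf (S11.phi' n φ) (EMetric.diam (c_ i)) := by
        intro i
        rcases eq_or_ne (EMetric.diam (c_ i)) 0 with h0d | hne0
        · refine ⟨fun _ => c_ i, Set.subset_iUnion (fun _ : ℕ => c_ i) 0,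
            fun _ => hdiam i, ?_⟩
          simp [h0d, S11.gauge_zero h0]
        rcases eq_or_ne (EMetric.diam (c_ i)) ∞ with hinf | hfin
        · refine ⟨fun _ => c_ i, Set.subset_iUnion (fun _ : ℕ => c_ i) 0,
            fun _ => hdiam i, ?_⟩
          rw [hinf]
          have htop : ENNReal.ofReal K * gaugeOf (S11.phi' n φ) ⊤ = ⊤ := by
            rw [gaugeOf, if_pos rfl, ENNReal.mul_top
              (ENNReal.ofReal_pos.mpr hK0).ne']
          rw [htop]
          exact le_top
        · set d := (EMetric.diam (c_ i)).toReal with hd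
          have hd0 : 0 < d := ENNReal.toReal_pos hne0 hfin
          obtain ⟨t, ht0, htd, hqt⟩ := S11.exists_lt_two_m hd0 (hm d hd0)
          obtain ⟨cc, hccov, hcdiam, hcsum⟩ := S11.cover_cost hn φ hs.monotoneOn h0 (c_ i)
            ht0 htd (by rw [hd, ENNReal.ofReal_toReal hfin])
          refine ⟨cc, hccov, fun j => le_trans (hcdiam j) ?_, le_trans hcsum ?_⟩
          · calc ENNReal.ofReal t ≤ ENNReal.ofReal d := ENNReal.ofReal_le_ofReal htd
              _ = EMetric.diam (c_ i) := by rw [hd, ENNReal.ofReal_toReal hfin]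
              _ ≤ δ := hdiam i
          · have halg : (3 * Real.sqrt n * (d / t)) ^ n * φ t ≤ K * S11.phi' n φ d := by
              have h1 : (3 * Real.sqrt n * (d/t))^n * φ t
                  = (3*Real.sqrt n)^n * (d^n * S11.q n φ t) := by
                rw [S11.q, mul_pow, div_pow]
                field_simp
              rw [h1, S11.phi'_of_pos hd0]
              have h2 : d ^ n * S11.q n φ t ≤ d ^ n * (2 * S11.m n φ d) :=
                mul_le_mul_of_nonneg_left hqt.le (by positivity)
              calc (3*Real.sqrt n)^n * (d^n * S11.q n φ t)
                  ≤ (3*Real.sqrt n)^n * (d^n * (2 * S11.m n φ d)) :=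
                    mul_le_mul_of_nonneg_left h2 (by positivity)
                _ = K * (d ^ n * S11.m n φ d) := by rw [hK]; ring
            have hgd : gaugeOf (S11.phi' n φ) (EMetric.diam (c_ i))
                = ENNReal.ofReal (S11.phi' n φ d) := by
              rw [gaugeOf, if_neg hfin]
            rw [hgd, ← ENNReal.ofReal_mul hK0.le]
            exact ENNReal.ofReal_le_ofReal halg
      choose cc hccov hcdiam hcsum using H
      set e : ℕ ≃ ℕ × ℕ := (Denumerable.eqv (ℕ × ℕ)).symm with hedef
      set C' : ℕ → Set (En n) := fun j => cc (e j).1 (e j).2 with hC'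
      have hA : E ⊆ ⋃ j, C' j := by
        intro x hx
        obtain ⟨i, hi⟩ := Set.mem_iUnion.mp (hcov hx)
        obtain ⟨j, hj⟩ := Set.mem_iUnion.mp (hccov i hi)
        refine Set.mem_iUnion.mpr ⟨e.symm (i, j), ?_⟩
        rw [hC']
        simp only [Equiv.apply_symm_apply]
        exact hj
      have hB : ∀ j, EMetric.diam (C' j) ≤ δ := fun j => hcdiam _ _
      have h1 : hPre φ δ E ≤ ∑' j, gaugeOf φ (EMetric.diam (C' j)) := by
        have hrfl : hPre φ δ E = ⨅ (c : ℕ → Set (En n)) (_ : E ⊆ ⋃ i, c i)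
            (_ : ∀ i, EMetric.diam (c i) ≤ δ), ∑' i, gaugeOf φ (EMetric.diam (c i)) := rfl
        rw [hrfl]
        exact iInf_le_of_le C' (iInf_le_of_le hA (iInf_le _ hB))
      have h2 : ∑' j, gaugeOf φ (EMetric.diam (C' j))
          = ∑' (i : ℕ), ∑' (j : ℕ), gaugeOf φ (EMetric.diam (cc i j)) := by
        rw [hC']
        rw [Equiv.tsum_eq e (fun p : ℕ × ℕ => gaugeOf φ (EMetric.diam (cc p.1 p.2)))]
        exact ENNReal.tsum_prod (f := fun a b => gaugeOf φ (EMetric.diam (cc a b)))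
      calc hPre φ δ E ≤ ∑' j, gaugeOf φ (EMetric.diam (C' j)) := h1
        _ = ∑' (i : ℕ), ∑' (j : ℕ), gaugeOf φ (EMetric.diam (cc i j)) := h2
        _ ≤ ∑' (i : ℕ), ENNReal.ofReal K * gaugeOf (S11.phi' n φ) (EMetric.diam (c_ i)) :=
            ENNReal.tsum_le_tsum fun i => hcsum i
        _ = ENNReal.ofReal K * ∑' i, gaugeOf (S11.phi' n φ) (EMetric.diam (c_ i)) :=
            ENNReal.tsum_mul_left
    have hrfl' : hPre (S11.phi' n φ) δ E = ⨅ (c : ℕ → Set (En n)) (_ : E ⊆ ⋃ i, c i)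
        (_ : ∀ i, EMetric.diam (c i) ≤ δ),
          ∑' i, gaugeOf (S11.phi' n φ) (EMetric.diam (c i)) := rfl
    rw [hrfl']
    refine le_iInf fun c_ => le_iInf fun hcov => le_iInf fun hdiam => ?_
    calc ENNReal.ofReal K⁻¹ * hPre φ δ E
        ≤ ENNReal.ofReal K⁻¹ * (ENNReal.ofReal K *
            ∑' i, gaugeOf (S11.phi' n φ) (EMetric.diam (c_ i))) :=
          mul_le_mul_right (key c_ hcov hdiam) _
      _ = ENNReal.ofReal (K⁻¹ * K) *
            ∑' i, gaugeOf (S11.phi' n φ) (EMetric.diam (c_ i)) := by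
          rw [← mul_assoc, ← ENNReal.ofReal_mul (inv_nonneg.mpr hK0.le)]
      _ = ∑' i, gaugeOf (S11.phi' n φ) (EMetric.diam (c_ i)) := by
          rw [inv_mul_cancel₀ hK0.ne', ENNReal.ofReal_one, one_mul]
  · -- easy direction
    have hg : ∀ d, gaugeOf (S11.phi' n φ) d ≤ gaugeOf φ d :=
      S11.gauge_le_gauge (fun r hr => S11.phi'_le_phi hs h0 hr)
    exact iInf_mono fun c_ => iInf_mono fun _ => iInf_mono fun _ =>
      ENNReal.tsum_le_tsum fun i => hg _
end

section
/- Let n ∈ ℕ, let A be a Young function satisfying conditions (C) and (C₀), and let φ be a gauge function. Then the function ψ(r) = φ(J^{−1}(r)) is continuous and increasing, ψ(r)/r^n is non-increasing on (0,∞), and consequently ψ(kr) ≤ max{1, k^n} ψ(r) for all k > 0 and r ≥ 0. -/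
open MeasureTheory Filter Set Topology ENNReal

section AuxProofs

open Real Set MeasureTheory Filter

private lemma young_mono' {A : ℝ → ℝ} (hA : IsYoung A) : MonotoneOn A (Set.Ici 0) := by
  rintro x (hx : (0:ℝ) ≤ x) y (hy : (0:ℝ) ≤ y) hxy
  rcases eq_or_lt_of_le hy with h0 | h0
  · subst h0
    have hx0 : x = 0 := le_antisymm hxy hx
    rw [hx0]
  · have key := hA.convexOn.2 (Set.self_mem_Ici (a := (0:ℝ))) (Set.mem_Ici.2 hy)
      (show (0:ℝ) ≤ 1 - x / y by
        have : x / y ≤ 1 := div_le_one_of_le₀ hxy hy; linarith)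
      (show (0:ℝ) ≤ x / y by positivity)
      (show (1 - x / y) + x / y = 1 by ring)
    have hxy' : (1 - x / y) • (0:ℝ) + (x / y) • y = x := by rw [smul_zero, smul_eq_mul, zero_add]; field_simp
    rw [hxy'] at key
    have h1 : A x ≤ (x / y) * A y := by simpa [hA.zero, smul_eq_mul] using key
    have hAy : 0 ≤ A y := hA.nonneg y hy
    nlinarith [div_le_one_of_le₀ hxy hy]

private lemma young_ratio' {A : ℝ → ℝ} (hA : IsYoung A) :
    ∀ x y : ℝ, 0 < x → x ≤ y → A x / x ≤ A y / y := by
  intro x y hx hxy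
  have hy : 0 < y := hx.trans_le hxy
  have key := hA.convexOn.2 (Set.self_mem_Ici (a := (0:ℝ))) (Set.mem_Ici.2 hy.le)
    (show (0:ℝ) ≤ 1 - x / y by
      have : x / y ≤ 1 := div_le_one_of_le₀ hxy hy.le; linarith)
    (show (0:ℝ) ≤ x / y by positivity)
    (show (1 - x / y) + x / y = 1 by ring)
  have hxy' : (1 - x / y) • (0:ℝ) + (x / y) • y = x := by rw [smul_zero, smul_eq_mul, zero_add]; field_simp
  rw [hxy'] at key
  have h1 : A x ≤ (x / y) * A y := by simpa [hA.zero, smul_eq_mul] using key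
  rw [div_le_div_iff₀ hx hy]
  have h2 := mul_le_mul_of_nonneg_right h1 hy.le
  calc A x * y ≤ (x / y) * A y * y := h2
    _ = A y * x := by field_simp

/-- The key properties of `Bfun n A` in the case `n ≥ 2`. -/
private lemma Bfun_props_ge_two
    {n : ℕ} (hn : 2 ≤ n)
    {A : ℝ → ℝ} (hA : IsYoung A) (hC : CondC n A) (hC0 : CondC0 n A)
    {Binv : ℝ → ℝ} (hBinv : IsInvOn0 (Bfun n A) Binv) :
    Bfun n A 0 = 0 ∧ MonotoneOn (Bfun n A) (Set.Ici 0) ∧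
      ∀ t₁ t₂ : ℝ, 0 < t₁ → t₁ ≤ t₂ → Bfun n A t₁ / t₁ ^ n ≤ Bfun n A t₂ / t₂ ^ n := by
  obtain ⟨m, hm, hnm⟩ : ∃ m : ℕ, 1 ≤ m ∧ n = m + 1 :=
    ⟨n - 1, by omega, by omega⟩
  have hne : n ≠ 1 := by omega
  have hn1R : (1:ℝ) ≤ (n:ℝ) - 1 := by
    have : (2:ℝ) ≤ (n:ℝ) := by exact_mod_cast hn
    linarith
  have hnR : (0:ℝ) < (n:ℝ) - 1 := by linarith
  set p : ℝ := conjExp n with hp_def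
  have hp_pos : 0 < p := by
    rw [hp_def, conjExp]
    have : (0:ℝ) < (n:ℝ) := by positivity
    exact div_pos this hnR
  have hApos : ∀ t : ℝ, 0 < t → 0 < A t := hC0.1
  -- superlinearity of A from condition (C)
  have hsup : ∀ s : ℝ, 0 ≤ s → ∃ T : ℝ, 0 < T ∧ ∀ τ : ℝ, T ≤ τ → τ * (s + 1) ≤ A τ := by
    intro s hs
    rw [CondC, if_neg hne] at hC
    obtain ⟨t₀, ht₀, hint⟩ := hC
    set c : ℝ := 1 / (s + 1) with hc_def
    have hc : 0 < c := by positivity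
    -- find a point with small ratio
    have hpt : ∃ t₁ : ℝ, t₀ < t₁ ∧ t₁ / A t₁ ≤ c := by
      by_contra hcon
      push_neg at hcon
      set ε : ℝ := c ^ (1 / ((n:ℝ) - 1)) with hε_def
      have hε : 0 < ε := Real.rpow_pos_of_pos hc _
      have hbig : ∀ t : ℝ, t ∈ Set.Ioi t₀ → ε ≤ (t / A t) ^ (1 / ((n:ℝ) - 1)) := by
        intro t ht
        exact Real.rpow_le_rpow hc.le (hcon t ht).le (by positivity)
      have hfin := hint.measure_ge_lt_top hε
      have hsub : Set.Ioi t₀ ⊆ {a : ℝ | ε ≤ (a / A a) ^ (1 / ((n:ℝ) - 1))} := fun t ht => hbig t ht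
      have h1 : (volume.restrict (Set.Ioi t₀)) (Set.Ioi t₀)
          ≤ (volume.restrict (Set.Ioi t₀)) {a : ℝ | ε ≤ (a / A a) ^ (1 / ((n:ℝ) - 1))} :=
        measure_mono hsub
      rw [Measure.restrict_apply_self, Real.volume_Ioi] at h1
      exact absurd (h1.trans_lt hfin) (by simp)
    obtain ⟨t₁, ht₁, hrat⟩ := hpt
    have ht₁pos : 0 < t₁ := ht₀.trans ht₁
    refine ⟨t₁, ht₁pos, fun τ hτ => ?_⟩
    have hτpos : 0 < τ := ht₁pos.trans_le hτ
    have hA₁ : 0 < A t₁ := hApos _ ht₁pos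
    have hAτ : 0 < A τ := hApos _ hτpos
    have hratio : A t₁ / t₁ ≤ A τ / τ := young_ratio' hA t₁ τ ht₁pos hτ
    have h2 : τ / A τ ≤ t₁ / A t₁ := by
      rw [div_le_div_iff₀ hAτ hA₁]
      rw [div_le_div_iff₀ ht₁pos hτpos] at hratio
      linarith
    have h3 : τ / A τ ≤ c := h2.trans hrat
    have h4 : τ ≤ c * A τ := by
      rw [div_le_iff₀ hAτ] at h3; exact h3
    rw [hc_def] at h4
    have : τ * (s + 1) ≤ (1 / (s + 1)) * A τ * (s + 1) :=
      mul_le_mul_of_nonneg_right h4 (by positivity)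
    calc τ * (s + 1) ≤ (1 / (s + 1)) * A τ * (s + 1) := this
      _ = A τ := by field_simp
  -- boundedness of the conjugate-defining sets
  have hbdd : ∀ s : ℝ, BddAbove ((fun τ => τ * s - A τ) '' Set.Ici 0) := by
    intro s
    obtain ⟨T, hT, hTle⟩ := hsup (max s 0) (le_max_right _ _)
    refine ⟨max (T * max s 0) 0, ?_⟩
    rintro x ⟨τ, (hτ : (0:ℝ) ≤ τ), rfl⟩
    rcases le_total τ T with h | h
    · have h1 : τ * s ≤ τ * max s 0 := mul_le_mul_of_nonneg_left (le_max_left _ _) hτ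
      have h2 : τ * max s 0 ≤ T * max s 0 := mul_le_mul_of_nonneg_right h (le_max_right _ _)
      have h3 : 0 ≤ A τ := hA.nonneg τ hτ
      have : τ * s - A τ ≤ T * max s 0 := by linarith
      exact this.trans (le_max_left _ _)
    · have h1 := hTle τ h
      have h2 : τ * s ≤ τ * max s 0 := mul_le_mul_of_nonneg_left (le_max_left _ _) hτ
      have hτ0 : 0 < τ := hT.trans_le h
      have h3 : τ * s - A τ ≤ 0 := by nlinarith
      exact h3.trans (le_max_right _ _)
  -- properties of the Young conjugate Ã
  set At : ℝ → ℝ := youngConj A with hAt_def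
  have hAt_mem0 : ∀ s : ℝ, (0:ℝ) ∈ (fun τ => τ * s - A τ) '' Set.Ici 0 := by
    intro s
    exact ⟨0, Set.self_mem_Ici, by simp [hA.zero]⟩
  have hAt_nonneg : ∀ s : ℝ, 0 ≤ At s := by
    intro s
    exact le_csSup (hbdd s) (hAt_mem0 s)
  have hAt_mono : Monotone At := by
    intro s₁ s₂ h12
    refine csSup_le ⟨0, hAt_mem0 s₁⟩ ?_
    rintro x ⟨τ, (hτ : (0:ℝ) ≤ τ), rfl⟩
    have h1 : τ * s₁ - A τ ≤ τ * s₂ - A τ := by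
      have := mul_le_mul_of_nonneg_left h12 hτ; linarith
    exact h1.trans (le_csSup (hbdd s₂) ⟨τ, hτ, rfl⟩)
  have hAt_meas : Measurable At := hAt_mono.measurable
  -- the integrand g
  set g : ℝ → ℝ := fun s => youngConj A s / s ^ (1 + p) with hg_def
  have hg_meas : Measurable g :=
    hAt_meas.div (Real.continuous_rpow_const (by positivity)).measurable
  have hg_nonneg : ∀ s : ℝ, 0 < s → 0 ≤ g s := by
    intro s hs
    exact div_nonneg (hAt_nonneg s) (Real.rpow_nonneg hs.le _)
  have hg_int : ∀ a b : ℝ, 0 < a → IntegrableOn g (Set.Ioc a b) volume := by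
    intro a b ha
    refine Measure.integrableOn_of_bounded (M := At b / a ^ (1 + p))
      measure_Ioc_lt_top.ne hg_meas.aestronglyMeasurable ?_
    filter_upwards [ae_restrict_mem measurableSet_Ioc] with x hx
    have hxa : a < x := hx.1
    have hxpos : 0 < x := ha.trans hxa
    rw [Real.norm_eq_abs, abs_of_nonneg (hg_nonneg x hxpos)]
    exact div_le_div₀ (hAt_nonneg b) (hAt_mono hx.2) (Real.rpow_pos_of_pos ha _)
      (Real.rpow_le_rpow ha.le hxa.le (by positivity))
  -- the tail integral I
  set I : ℝ → ℝ := fun a => ∫ s in Set.Ioi a, g s with hI_def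
  have hI_nonneg : ∀ a : ℝ, 0 ≤ a → 0 ≤ I a := by
    intro a ha
    exact setIntegral_nonneg measurableSet_Ioi fun x hx => hg_nonneg x (ha.trans_lt hx)
  have hI_anti : ∀ a b : ℝ, 0 < a → a ≤ b → I b ≤ I a := by
    intro a b ha hab
    by_cases hb : IntegrableOn g (Set.Ioi b) volume
    · have hIa : IntegrableOn g (Set.Ioi a) volume := by
        rw [← Set.Ioc_union_Ioi_eq_Ioi hab]
        exact (hg_int a b ha).union hb
      refine setIntegral_mono_set hIa ?_ (HasSubset.Subset.eventuallyLE (Set.Ioi_subset_Ioi hab))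
      filter_upwards [ae_restrict_mem measurableSet_Ioi] with x hx
      exact hg_nonneg x (ha.trans hx)
    · have hIa : ¬ IntegrableOn g (Set.Ioi a) volume := fun h =>
        hb (h.mono_set (Set.Ioi_subset_Ioi hab))
      rw [hI_def]
      simp only [integral_undef hIa, integral_undef hb]
      exact le_refl 0
  -- the function E
  set E : ℝ → ℝ := fun t => t ^ p * I t with hE_def
  have hE_zero : E 0 = 0 := by
    simp [hE_def, Real.zero_rpow hp_pos.ne']
  have hE_nonneg : ∀ t : ℝ, 0 ≤ t → 0 ≤ E t := by
    intro t ht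
    exact mul_nonneg (Real.rpow_nonneg ht _) (hI_nonneg t ht)
  -- the key scaling inequality for E
  have hE_key : ∀ t₁ t₂ τ : ℝ, 0 < t₁ → t₁ ≤ t₂ → 0 ≤ τ →
      E (τ * (t₂ / t₁) ^ m) * (t₁ / t₂) ^ n ≤ E τ := by
    intro t₁ t₂ τ ht₁ ht₁₂ hτ
    have ht₂ : 0 < t₂ := ht₁.trans_le ht₁₂
    set c : ℝ := t₂ / t₁ with hc_def
    have hc1 : 1 ≤ c := (one_le_div ht₁).2 ht₁₂
    have hc0 : 0 < c := lt_of_lt_of_le one_pos hc1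
    rcases eq_or_lt_of_le hτ with h0 | hτpos
    · rw [← h0]
      simp [hE_zero]
    · have hcm : 1 ≤ c ^ m := one_le_pow₀ hc1
      have hτ' : τ ≤ τ * c ^ m := le_mul_of_one_le_right hτ hcm
      have hI' : I (τ * c ^ m) ≤ I τ := hI_anti τ _ hτpos hτ'
      have hpow : (τ * c ^ m) ^ p = τ ^ p * c ^ (n : ℕ) := by
        rw [Real.mul_rpow hτ (by positivity)]
        congr 1
        rw [← Real.rpow_natCast c m, ← Real.rpow_natCast c n, ← Real.rpow_mul hc0.le]
        congr 1
        rw [hp_def, conjExp]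
        have hmR : ((m:ℝ)) = (n:ℝ) - 1 := by
          rw [hnm]; push_cast; ring
        rw [hmR]
        field_simp
      have hcn : c ^ (n:ℕ) * (t₁ / t₂) ^ n = 1 := by
        rw [← mul_pow, hc_def]
        have : t₂ / t₁ * (t₁ / t₂) = 1 := by field_simp
        rw [this, one_pow]
      have hEτ' : E (τ * c ^ m) * (t₁ / t₂) ^ n = τ ^ p * I (τ * c ^ m) := by
        rw [hE_def]
        simp only
        rw [hpow]
        calc τ ^ p * c ^ (n:ℕ) * I (τ * c ^ m) * (t₁ / t₂) ^ n
            = τ ^ p * I (τ * c ^ m) * (c ^ (n:ℕ) * (t₁ / t₂) ^ n) := by ring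
          _ = τ ^ p * I (τ * c ^ m) := by rw [hcn, mul_one]
      rw [hEτ']
      exact mul_le_mul_of_nonneg_left hI' (Real.rpow_nonneg hτ _)
  -- unfolding Bfun
  have hB_eq : ∀ t : ℝ, Bfun n A t = sSup ((fun τ => τ * t - E τ) '' Set.Ici 0) := by
    intro t
    rw [Bfun, if_neg hne]
    rfl
  have hSne : ∀ t : ℝ, ((fun τ => τ * t - E τ) '' Set.Ici 0).Nonempty :=
    fun t => ⟨0 * t - E 0, ⟨0, Set.self_mem_Ici, rfl⟩⟩
  -- boundedness of the sets S t for t ≥ 0, from the inverse hypothesis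
  have hSB : ∀ t : ℝ, 0 ≤ t → BddAbove ((fun τ => τ * t - E τ) '' Set.Ici 0) := by
    intro t ht
    by_contra hb
    have h0 : ∀ t' : ℝ, t ≤ t' → Bfun n A t' = 0 := by
      intro t' htt'
      have hb' : ¬ BddAbove ((fun τ => τ * t' - E τ) '' Set.Ici 0) := by
        rintro ⟨M, hM⟩
        refine hb ⟨M, ?_⟩
        rintro x ⟨τ, (hτ : (0:ℝ) ≤ τ), rfl⟩
        have h1 : τ * t - E τ ≤ τ * t' - E τ := by
          have := mul_le_mul_of_nonneg_left htt' hτ; linarith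
        exact h1.trans (hM ⟨τ, hτ, rfl⟩)
      rw [hB_eq t', csSup_of_not_bddAbove hb', Real.sSup_empty]
    have e1 := hBinv.2 t ht
    have e2 := hBinv.2 (t + 1) (by linarith)
    rw [h0 t le_rfl] at e1
    rw [h0 (t + 1) (by linarith)] at e2
    linarith
  -- B(0) = 0
  have hB0 : Bfun n A 0 = 0 := by
    rw [hB_eq 0]
    apply le_antisymm
    · refine csSup_le (hSne 0) ?_
      rintro x ⟨τ, (hτ : (0:ℝ) ≤ τ), rfl⟩
      have := hE_nonneg τ hτ
      simp only [zero_mul, mul_zero]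
      linarith
    · refine le_csSup (hSB 0 le_rfl) ⟨0, Set.self_mem_Ici, ?_⟩
      simp [hE_zero]
  refine ⟨hB0, ?_, ?_⟩
  · -- monotone
    intro t₁ ht₁ t₂ ht₂ h12
    rw [hB_eq t₁, hB_eq t₂]
    refine csSup_le (hSne t₁) ?_
    rintro x ⟨τ, (hτ : (0:ℝ) ≤ τ), rfl⟩
    have h1 : τ * t₁ - E τ ≤ τ * t₂ - E τ := by
      have := mul_le_mul_of_nonneg_left h12 hτ; linarith
    exact h1.trans (le_csSup (hSB t₂ ht₂) ⟨τ, hτ, rfl⟩)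
  · -- ratio monotone
    intro t₁ t₂ ht₁ h12
    have ht₂ : 0 < t₂ := ht₁.trans_le h12
    have h1 : Bfun n A t₁ ≤ (t₁ / t₂) ^ n * Bfun n A t₂ := by
      rw [hB_eq t₁, hB_eq t₂]
      refine csSup_le (hSne t₁) ?_
      rintro x ⟨τ, (hτ : (0:ℝ) ≤ τ), rfl⟩
      set τ' : ℝ := τ * (t₂ / t₁) ^ m with hτ'_def
      have hτ'0 : (0:ℝ) ≤ τ' := by positivity
      have h2 : τ' * t₂ - E τ' ≤ sSup ((fun τ => τ * t₂ - E τ) '' Set.Ici 0) :=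
        le_csSup (hSB t₂ ht₂.le) ⟨τ', hτ'0, rfl⟩
      have hkey := hE_key t₁ t₂ τ ht₁ h12 hτ
      have hid : (t₁ / t₂) ^ n * (τ' * t₂) = τ * t₁ := by
        rw [hτ'_def, hnm]
        have := ht₁.ne'
        have := ht₂.ne'
        have hh : t₁ / t₂ * (t₂ / t₁) = 1 := by field_simp
        have hh2 : (t₁ / t₂) ^ m * (t₂ / t₁) ^ m = 1 := by rw [← mul_pow, hh, one_pow]
        have hh3 : t₁ / t₂ * t₂ = t₁ := by field_simp
        rw [pow_succ]
        linear_combination (τ * (t₁ / t₂) * t₂) * hh2 + τ * hh3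
      calc τ * t₁ - E τ ≤ τ * t₁ - E τ' * (t₁ / t₂) ^ n := by linarith
        _ = (t₁ / t₂) ^ n * (τ' * t₂ - E τ') := by rw [mul_sub, hid]; ring
        _ ≤ (t₁ / t₂) ^ n * sSup ((fun τ => τ * t₂ - E τ) '' Set.Ici 0) :=
            mul_le_mul_of_nonneg_left h2 (by positivity)
    rw [div_le_div_iff₀ (by positivity) (by positivity)]
    have h3 := mul_le_mul_of_nonneg_right h1 (pow_pos ht₂ n).le
    have h4 : (t₁ / t₂) ^ n * Bfun n A t₂ * t₂ ^ n = Bfun n A t₂ * t₁ ^ n := by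
      rw [div_pow]
      field_simp
    linarith

end AuxProofs

/-- Lemma `lemma3`. -/
theorem statement14
    (n : ℕ) (hn : 0 < n)
    (A : ℝ → ℝ) (hA : IsYoung A) (hC : CondC n A) (hC0 : CondC0 n A)
    (φ : ℝ → ℝ) (hφ : IsGauge n φ)
    (Binv : ℝ → ℝ) (hBinv : IsInvOn0 (Bfun n A) Binv)
    (Jinv : ℝ → ℝ) (hJinv : IsInvOn0 (Jfun n Binv φ) Jinv)
    (ψ : ℝ → ℝ) (hψ : ∀ r, ψ r = φ (Jinv r)) :
    ContinuousOn ψ (Set.Ici 0) ∧ StrictMonoOn ψ (Set.Ici 0) ∧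
      AntitoneOn (fun r => ψ r / r ^ n) (Set.Ioi 0) ∧
      ∀ k r : ℝ, 0 < k → 0 ≤ r → ψ (k * r) ≤ max 1 (k ^ n) * ψ r := by
  classical
  -- basic facts about Bfun
  obtain ⟨hB0, hBmono, hBratio⟩ :
      Bfun n A 0 = 0 ∧ MonotoneOn (Bfun n A) (Set.Ici 0) ∧
        ∀ t₁ t₂ : ℝ, 0 < t₁ → t₁ ≤ t₂ → Bfun n A t₁ / t₁ ^ n ≤ Bfun n A t₂ / t₂ ^ n := by
    rcases eq_or_ne n 1 with h1 | h1
    · subst h1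
      have hBA : Bfun 1 A = A := if_pos rfl
      refine ⟨by rw [hBA]; exact hA.zero, by rw [hBA]; exact young_mono' hA, ?_⟩
      intro t₁ t₂ ht₁ h12
      rw [hBA]
      simpa [pow_one] using young_ratio' hA t₁ t₂ ht₁ h12
    · exact Bfun_props_ge_two (by omega) hA hC hC0 hBinv
  -- facts about Binv
  have hBinv_nonneg : ∀ u : ℝ, 0 ≤ u → 0 ≤ Binv u := fun u hu => (hBinv.1 u hu).1
  have hBBinv : ∀ u : ℝ, 0 ≤ u → Bfun n A (Binv u) = u := fun u hu => (hBinv.1 u hu).2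
  have hBinv_zero : Binv 0 = 0 := by
    have h := hBinv.2 0 le_rfl
    rwa [hB0] at h
  have hBinv_strict : ∀ u₁ u₂ : ℝ, 0 ≤ u₁ → u₁ < u₂ → Binv u₁ < Binv u₂ := by
    intro u₁ u₂ h1 h12
    by_contra h
    push_neg at h
    have hmono := hBmono (Set.mem_Ici.2 (hBinv_nonneg u₂ (h1.trans h12.le)))
      (Set.mem_Ici.2 (hBinv_nonneg u₁ h1)) h
    rw [hBBinv u₁ h1, hBBinv u₂ (h1.trans h12.le)] at hmono
    linarith
  have hBinv_pos : ∀ u : ℝ, 0 < u → 0 < Binv u := by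
    intro u hu
    have := hBinv_strict 0 u le_rfl hu
    rwa [hBinv_zero] at this
  have hBinv_mono : ∀ u₁ u₂ : ℝ, 0 ≤ u₁ → u₁ ≤ u₂ → Binv u₁ ≤ Binv u₂ := by
    intro u₁ u₂ h1 h12
    rcases eq_or_lt_of_le h12 with rfl | h
    · exact le_rfl
    · exact (hBinv_strict u₁ u₂ h1 h).le
  -- the function F(u) = u / (Binv u)^n is nondecreasing on (0,∞)
  have hFmono : ∀ u₁ u₂ : ℝ, 0 < u₁ → u₁ ≤ u₂ →
      u₁ / (Binv u₁) ^ n ≤ u₂ / (Binv u₂) ^ n := by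
    intro u₁ u₂ h1 h12
    have hv1 : 0 < Binv u₁ := hBinv_pos u₁ h1
    have hv12 : Binv u₁ ≤ Binv u₂ := hBinv_mono u₁ u₂ h1.le h12
    have := hBratio (Binv u₁) (Binv u₂) hv1 hv12
    rwa [hBBinv u₁ h1.le, hBBinv u₂ (h1.trans_le h12).le] at this
  -- facts about φ
  have hφpos : ∀ s : ℝ, 0 < s → 0 < φ s := by
    intro s hs
    have := hφ.strictMonoOn (Set.self_mem_Ici) (Set.mem_Ici.2 hs.le) hs
    rwa [hφ.zero] at this
  have hφmono := hφ.strictMonoOn.monotoneOn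
  have hupos : ∀ s : ℝ, 0 < s → 0 < φ s / s ^ n := by
    intro s hs
    exact div_pos (hφpos s hs) (pow_pos hs n)
  -- facts about Jfun
  have hJ_zero : Jfun n Binv φ 0 = 0 := if_pos rfl
  have hJ_pos : ∀ s : ℝ, 0 < s → 0 < Jfun n Binv φ s := by
    intro s hs
    rw [Jfun, if_neg hs.ne']
    exact mul_pos hs (hBinv_pos _ (hupos s hs))
  -- key identity for Jfun
  have hJpow : ∀ s : ℝ, 0 < s →
      (Jfun n Binv φ s) ^ n * (φ s / s ^ n / (Binv (φ s / s ^ n)) ^ n) = φ s := by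
    intro s hs
    rw [Jfun, if_neg hs.ne']
    have hb : 0 < Binv (φ s / s ^ n) := hBinv_pos _ (hupos s hs)
    rw [mul_pow]
    field_simp
  have hFu_pos : ∀ s : ℝ, 0 < s → 0 < φ s / s ^ n / (Binv (φ s / s ^ n)) ^ n := by
    intro s hs
    exact div_pos (hupos s hs) (pow_pos (hBinv_pos _ (hupos s hs)) n)
  -- Jfun is strictly monotone on [0,∞)
  have hJ_strict : StrictMonoOn (Jfun n Binv φ) (Set.Ici 0) := by
    rintro s₁ (hs₁ : (0:ℝ) ≤ s₁) s₂ (hs₂ : (0:ℝ) ≤ s₂) h12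
    rcases eq_or_lt_of_le hs₁ with h0 | h0
    · rw [← h0, hJ_zero]
      exact hJ_pos s₂ (by linarith)
    · have hs₂' : 0 < s₂ := h0.trans h12
      have key₁ := hJpow s₁ h0
      have key₂ := hJpow s₂ hs₂'
      have hF1 := hFu_pos s₁ h0
      have hF2 := hFu_pos s₂ hs₂'
      have hu21 : φ s₂ / s₂ ^ n ≤ φ s₁ / s₁ ^ n :=
        hφ.ratio_antitone (Set.mem_Ioi.2 h0) (Set.mem_Ioi.2 hs₂') h12.le
      have hF12 : φ s₂ / s₂ ^ n / (Binv (φ s₂ / s₂ ^ n)) ^ n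
          ≤ φ s₁ / s₁ ^ n / (Binv (φ s₁ / s₁ ^ n)) ^ n :=
        hFmono _ _ (hupos s₂ hs₂') hu21
      have hφ12 : φ s₁ < φ s₂ :=
        hφ.strictMonoOn (Set.mem_Ici.2 h0.le) (Set.mem_Ici.2 hs₂'.le) h12
      have hpow : (Jfun n Binv φ s₁) ^ n < (Jfun n Binv φ s₂) ^ n := by
        have e₁ : (Jfun n Binv φ s₁) ^ n = φ s₁ / (φ s₁ / s₁ ^ n / (Binv (φ s₁ / s₁ ^ n)) ^ n) :=
          (eq_div_iff hF1.ne').2 key₁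
        have e₂ : (Jfun n Binv φ s₂) ^ n = φ s₂ / (φ s₂ / s₂ ^ n / (Binv (φ s₂ / s₂ ^ n)) ^ n) :=
          (eq_div_iff hF2.ne').2 key₂
        rw [e₁, e₂]
        calc φ s₁ / (φ s₁ / s₁ ^ n / (Binv (φ s₁ / s₁ ^ n)) ^ n)
            ≤ φ s₁ / (φ s₂ / s₂ ^ n / (Binv (φ s₂ / s₂ ^ n)) ^ n) :=
              ((div_le_div_iff_of_pos_left (hφpos s₁ h0) hF1 hF2).2 hF12)
          _ < φ s₂ / (φ s₂ / s₂ ^ n / (Binv (φ s₂ / s₂ ^ n)) ^ n) :=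
              (div_lt_div_iff_of_pos_right hF2).2 hφ12
      exact lt_of_pow_lt_pow_left₀ n (hJ_pos s₂ hs₂').le hpow
  have hJ_mono := hJ_strict.monotoneOn
  -- facts about Jinv
  have hJinv_nonneg : ∀ r : ℝ, 0 ≤ r → 0 ≤ Jinv r := fun r hr => (hJinv.1 r hr).1
  have hJJinv : ∀ r : ℝ, 0 ≤ r → Jfun n Binv φ (Jinv r) = r := fun r hr => (hJinv.1 r hr).2
  have hJinv_zero : Jinv 0 = 0 := by
    have h := hJinv.2 0 le_rfl
    rwa [hJ_zero] at h
  have hJinv_pos : ∀ r : ℝ, 0 < r → 0 < Jinv r := by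
    intro r hr
    rcases eq_or_lt_of_le (hJinv_nonneg r hr.le) with h0 | h0
    · exfalso
      have := hJJinv r hr.le
      rw [← h0, hJ_zero] at this
      linarith
    · exact h0
  have hJinv_strict : StrictMonoOn Jinv (Set.Ici 0) := by
    rintro r₁ (hr₁ : (0:ℝ) ≤ r₁) r₂ (hr₂ : (0:ℝ) ≤ r₂) h12
    by_contra h
    push_neg at h
    have := hJ_mono (Set.mem_Ici.2 (hJinv_nonneg r₂ hr₂)) (Set.mem_Ici.2 (hJinv_nonneg r₁ hr₁)) h
    rw [hJJinv r₁ hr₁, hJJinv r₂ hr₂] at this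
    linarith
  have hJinv_mono := hJinv_strict.monotoneOn
  -- continuity of Jinv via a global monotone surjective extension
  have hJinv_cont : ContinuousOn Jinv (Set.Ici 0) := by
    set G : ℝ → ℝ := fun r => if r ≤ 0 then r else Jinv r with hG_def
    have hG_mono : Monotone G := by
      intro a b hab
      by_cases ha : a ≤ 0
      · by_cases hb : b ≤ 0
        · simpa [hG_def, ha, hb] using hab
        · push_neg at hb
          have : (0:ℝ) < Jinv b := hJinv_pos b hb
          simp only [hG_def, if_pos ha, if_neg (not_le.2 hb)]
          linarith
      · push_neg at ha
        have hb : ¬ b ≤ 0 := by push_neg; linarith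
        simp only [hG_def, if_neg (not_le.2 ha), if_neg hb]
        exact hJinv_mono (Set.mem_Ici.2 ha.le) (Set.mem_Ici.2 (by linarith : (0:ℝ) ≤ b)) hab
    have hG_surj : Function.Surjective G := by
      intro y
      rcases le_or_gt y 0 with hy | hy
      · exact ⟨y, if_pos hy⟩
      · refine ⟨Jfun n Binv φ y, ?_⟩
        have hJy : 0 < Jfun n Binv φ y := hJ_pos y hy
        simp only [hG_def, if_neg (not_le.2 hJy)]
        exact hJinv.2 y hy.le
    have hG_cont : Continuous G := hG_mono.continuous_of_surjective hG_surj
    refine hG_cont.continuousOn.congr ?_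
    rintro r (hr : (0:ℝ) ≤ r)
    rcases eq_or_lt_of_le hr with h0 | h0
    · simp [hG_def, ← h0, hJinv_zero]
    · simp [hG_def, not_le.2 h0]
  -- ψ basics
  have hψ0 : ψ 0 = 0 := by rw [hψ 0, hJinv_zero, hφ.zero]
  have hψ_nonneg : ∀ r : ℝ, 0 ≤ r → 0 ≤ ψ r := by
    intro r hr
    rw [hψ r]
    have := hφmono (Set.self_mem_Ici) (Set.mem_Ici.2 (hJinv_nonneg r hr)) (hJinv_nonneg r hr)
    rwa [hφ.zero] at this
  -- goal 1 : continuity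
  have goal1 : ContinuousOn ψ (Set.Ici 0) := by
    have h : ContinuousOn (fun r => φ (Jinv r)) (Set.Ici 0) :=
      hφ.continuousOn.comp hJinv_cont fun r hr => Set.mem_Ici.2 (hJinv_nonneg r hr)
    exact h.congr fun r _ => hψ r
  -- goal 2 : strict monotonicity
  have goal2 : StrictMonoOn ψ (Set.Ici 0) := by
    intro r₁ hr₁ r₂ hr₂ h12
    rw [hψ r₁, hψ r₂]
    exact hφ.strictMonoOn (Set.mem_Ici.2 (hJinv_nonneg r₁ hr₁))
      (Set.mem_Ici.2 (hJinv_nonneg r₂ hr₂)) (hJinv_strict hr₁ hr₂ h12)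
  -- goal 3 : the ratio is antitone
  have hratio_eq : ∀ r : ℝ, 0 < r →
      ψ r / r ^ n = φ (Jinv r) / (Jinv r) ^ n / (Binv (φ (Jinv r) / (Jinv r) ^ n)) ^ n := by
    intro r hr
    have hs : 0 < Jinv r := hJinv_pos r hr
    have hJp := hJpow (Jinv r) hs
    rw [hJJinv r hr.le] at hJp
    rw [hψ r, div_eq_iff (pow_pos hr n).ne']
    linear_combination -hJp
  have goal3 : AntitoneOn (fun r => ψ r / r ^ n) (Set.Ioi 0) := by
    rintro r₁ (hr₁ : (0:ℝ) < r₁) r₂ (hr₂ : (0:ℝ) < r₂) h12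
    simp only
    rw [hratio_eq r₁ hr₁, hratio_eq r₂ hr₂]
    have hs₁ : 0 < Jinv r₁ := hJinv_pos r₁ hr₁
    have hs₂ : 0 < Jinv r₂ := hJinv_pos r₂ hr₂
    have hs12 : Jinv r₁ ≤ Jinv r₂ :=
      hJinv_mono (Set.mem_Ici.2 hr₁.le) (Set.mem_Ici.2 hr₂.le) h12
    have hu21 : φ (Jinv r₂) / (Jinv r₂) ^ n ≤ φ (Jinv r₁) / (Jinv r₁) ^ n :=
      hφ.ratio_antitone (Set.mem_Ioi.2 hs₁) (Set.mem_Ioi.2 hs₂) hs12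
    exact hFmono _ _ (hupos _ hs₂) hu21
  refine ⟨goal1, goal2, goal3, ?_⟩
  -- goal 4 : the scaling inequality
  intro k r hk hr
  rcases eq_or_lt_of_le hr with h0 | h0
  · rw [← h0, mul_zero, hψ0, mul_zero]
  · have hψr : 0 ≤ ψ r := hψ_nonneg r hr
    rcases le_or_gt k 1 with hk1 | hk1
    · have hkr : k * r ≤ r := by nlinarith
      have hkr0 : (0:ℝ) ≤ k * r := by positivity
      have h1 : ψ (k * r) ≤ ψ r :=
        goal2.monotoneOn (Set.mem_Ici.2 hkr0) (Set.mem_Ici.2 hr) hkr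
      have h2 : ψ r ≤ max 1 (k ^ n) * ψ r :=
        le_mul_of_one_le_left hψr (le_max_left _ _)
      linarith
    · have hkr : r ≤ k * r := by nlinarith
      have hkr0 : (0:ℝ) < k * r := by positivity
      have h1 := goal3 (Set.mem_Ioi.2 h0) (Set.mem_Ioi.2 hkr0) hkr
      simp only at h1
      rw [div_le_div_iff₀ (pow_pos hkr0 n) (pow_pos h0 n)] at h1
      have hkn : (k * r) ^ n = k ^ n * r ^ n := mul_pow k r n
      have h2 : ψ (k * r) ≤ k ^ n * ψ r := by
        have hrn : (0:ℝ) < r ^ n := pow_pos h0 n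
        nlinarith
      have h3 : k ^ n * ψ r ≤ max 1 (k ^ n) * ψ r :=
        mul_le_mul_of_nonneg_right (le_max_right _ _) hψr
      linarith
end

section
/- Let n ∈ ℕ, let A be a Young function satisfying conditions (C) and (C₀), let φ be a gauge function, and let B and ψ be the associated functions. Then ψ(st) ≤ φ(t) + t^n B(s) for all s, t > 0. -/
open MeasureTheory Filter Set Topology ENNReal

section Aux

lemma aux_sSup_nonneg {S : Set ℝ} (h : (0:ℝ) ∈ S) : 0 ≤ sSup S := by
  by_cases hb : BddAbove S
  · exact le_csSup hb h
  · simp [Real.sSup_of_not_bddAbove hb]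

lemma youngConj_nonneg {A : ℝ → ℝ} (hA0 : A 0 = 0) (t : ℝ) : 0 ≤ youngConj A t := by
  apply aux_sSup_nonneg
  have h0 : (0:ℝ) ∈ Set.Ici (0:ℝ) := Set.self_mem_Ici
  have := Set.mem_image_of_mem (fun τ => τ * t - A τ) h0
  simpa [hA0] using this

lemma youngConj_bdd_mono {A : ℝ → ℝ} {a b : ℝ} (hab : a ≤ b)
    (hb : BddAbove ((fun τ => τ * b - A τ) '' Set.Ici 0)) :
    BddAbove ((fun τ => τ * a - A τ) '' Set.Ici 0) := by
  obtain ⟨M, hM⟩ := hb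
  refine ⟨M, ?_⟩
  rintro y ⟨τ, hτ, rfl⟩
  have h1 : τ * a - A τ ≤ τ * b - A τ := by
    have := mul_le_mul_of_nonneg_left hab (Set.mem_Ici.1 hτ)
    linarith
  exact h1.trans (hM ⟨τ, hτ, rfl⟩)

lemma youngConj_mono {A : ℝ → ℝ} {a b : ℝ} (hab : a ≤ b)
    (hb : BddAbove ((fun τ => τ * b - A τ) '' Set.Ici 0)) :
    youngConj A a ≤ youngConj A b := by
  apply csSup_le (Set.Nonempty.image _ Set.nonempty_Ici)
  rintro y ⟨τ, hτ, rfl⟩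
  have h1 : τ * a - A τ ≤ τ * b - A τ := by
    have := mul_le_mul_of_nonneg_left hab (Set.mem_Ici.1 hτ)
    linarith
  exact h1.trans (le_csSup hb ⟨τ, hτ, rfl⟩)

lemma I_mono (A : ℝ → ℝ) (hA0 : A 0 = 0) (p : ℝ) (hp : 0 ≤ p) {a b : ℝ}
    (ha : 0 < a) (hab : a ≤ b) :
    ∫ s in Set.Ioi b, youngConj A s / s ^ p ≤ ∫ s in Set.Ioi a, youngConj A s / s ^ p := by
  set g : ℝ → ℝ := fun s => youngConj A s / s ^ p with hg
  have hgnn : ∀ s : ℝ, 0 < s → 0 ≤ g s := fun s hs =>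
    div_nonneg (youngConj_nonneg hA0 s) (Real.rpow_nonneg hs.le p)
  have hIa_nn : 0 ≤ ∫ s in Set.Ioi a, g s :=
    setIntegral_nonneg measurableSet_Ioi (fun s hs => hgnn s (ha.trans hs))
  by_cases hb : BddAbove ((fun τ => τ * b - A τ) '' Set.Ici 0)
  · -- measurability via monotone extension
    have hmono : Monotone (fun t => youngConj A (min t b)) := by
      intro t t' htt'
      exact youngConj_mono (min_le_min_right b htt')
        (youngConj_bdd_mono (min_le_right t' b) hb)
    have hmeas : Measurable fun s : ℝ => youngConj A (min s b) / s ^ p :=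
      (hmono.measurable).div (measurable_id'.pow_const p)
    have heq : Set.EqOn g (fun s => youngConj A (min s b) / s ^ p) (Set.Ioc a b) :=
      fun s hs => by simp [hg, min_eq_left hs.2]
    have hint : IntegrableOn g (Set.Ioc a b) volume := by
      rw [IntegrableOn, integrable_congr
        ((ae_restrict_iff' measurableSet_Ioc).2 (Filter.Eventually.of_forall
          (fun s hs => heq hs)))]
      apply Integrable.mono' (g := fun _ : ℝ => youngConj A b / a ^ p)
      · exact (integrableOn_const measure_Ioc_lt_top.ne enorm_ne_top)
      · exact hmeas.aestronglyMeasurable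
      · filter_upwards [ae_restrict_mem measurableSet_Ioc] with s hs
        rw [Real.norm_eq_abs, abs_of_nonneg (div_nonneg
            (youngConj_nonneg hA0 _) (Real.rpow_nonneg (ha.trans hs.1).le p))]
        apply div_le_div₀ (youngConj_nonneg hA0 b)
          (youngConj_mono (min_le_right s b) hb)
          (Real.rpow_pos_of_pos ha p)
          (Real.rpow_le_rpow ha.le hs.1.le hp)
    by_cases hIb : IntegrableOn g (Set.Ioi b) volume
    · have hIa : IntegrableOn g (Set.Ioi a) volume := by
        rw [← Set.Ioc_union_Ioi_eq_Ioi hab]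
        exact hint.union hIb
      refine setIntegral_mono_set hIa ?_ ?_
      · filter_upwards [ae_restrict_mem measurableSet_Ioi] with s hs
        exact hgnn s (ha.trans hs)
      · exact HasSubset.Subset.eventuallyLE (Set.Ioi_subset_Ioi hab)
    · rw [integral_undef hIb]
      exact hIa_nn
  · have hz : ∀ s ∈ Set.Ioi b, g s = 0 := by
      intro s hs
      have hnb : ¬ BddAbove ((fun τ => τ * s - A τ) '' Set.Ici 0) :=
        fun h => hb (youngConj_bdd_mono (le_of_lt hs) h)
      simp [hg, youngConj, Real.sSup_of_not_bddAbove hnb]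
    rw [setIntegral_congr_fun measurableSet_Ioi hz]
    simpa using hIa_nn

end Aux

section Aux2

lemma conjExp_pos {n : ℕ} (hn : 2 ≤ n) : 0 < conjExp n := by
  have h1 : (1:ℝ) < n := by exact_mod_cast hn.trans_lt' one_lt_two
  exact div_pos (by linarith) (by linarith)

variable {n : ℕ} (A : ℝ → ℝ)

/-- The function `E` whose conjugate is `B` when `n ≥ 2`. -/
private noncomputable def Efun (n : ℕ) (A : ℝ → ℝ) (t : ℝ) : ℝ :=
  t ^ conjExp n * ∫ s in Set.Ioi t, youngConj A s / s ^ (1 + conjExp n)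

lemma Efun_zero (hn : 2 ≤ n) : Efun n A 0 = 0 := by
  simp [Efun, Real.zero_rpow (ne_of_gt (conjExp_pos hn))]

lemma Efun_nonneg (hA0 : A 0 = 0) {t : ℝ} (ht : 0 ≤ t) : 0 ≤ Efun n A t := by
  apply mul_nonneg (Real.rpow_nonneg ht _)
  apply setIntegral_nonneg measurableSet_Ioi
  intro s hs
  exact div_nonneg (youngConj_nonneg hA0 s) (Real.rpow_nonneg ((ht.trans_lt hs).le) _)

lemma Efun_scale (hn : 2 ≤ n) (hA0 : A 0 = 0) {σ μ : ℝ} (hσ : 0 ≤ σ) (hμ : 1 ≤ μ) :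
    Efun n A (μ ^ (n-1) * σ) ≤ μ ^ n * Efun n A σ := by
  rcases eq_or_lt_of_le hσ with rfl | hσ'
  · simp [Efun_zero A hn]
  · have hμ0 : (0:ℝ) < μ := lt_of_lt_of_le one_pos hμ
    have hlam1 : (1:ℝ) ≤ μ ^ (n-1) := one_le_pow₀ hμ
    have hlam0 : (0:ℝ) < μ ^ (n-1) := lt_of_lt_of_le one_pos hlam1
    have hle : σ ≤ μ ^ (n-1) * σ := le_mul_of_one_le_left hσ hlam1
    have hI := I_mono A hA0 (1 + conjExp n) (by linarith [conjExp_pos hn]) hσ' hle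
    have hpow : (μ ^ (n-1) * σ) ^ conjExp n = μ ^ n * σ ^ conjExp n := by
      rw [Real.mul_rpow hlam0.le hσ, ← Real.rpow_natCast μ (n-1),
        ← Real.rpow_mul hμ0.le, ← Real.rpow_natCast μ n]
      congr 2
      have h1 : ((n:ℝ) - 1) ≠ 0 := by
        have : (2:ℝ) ≤ n := by exact_mod_cast hn
        linarith
      have hc : ((n-1 : ℕ) : ℝ) = (n:ℝ) - 1 := by
        have : 1 ≤ n := by omega
        push_cast [this]; ring
      rw [hc]
      rw [conjExp, mul_comm]; exact div_mul_cancel₀ _ h1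
    calc Efun n A (μ ^ (n-1) * σ)
        ≤ (μ ^ (n-1) * σ) ^ conjExp n * ∫ s in Set.Ioi σ, youngConj A s / s ^ (1 + conjExp n) :=
          mul_le_mul_of_nonneg_left hI (Real.rpow_nonneg (by positivity) _)
      _ = μ ^ n * Efun n A σ := by rw [hpow, Efun]; ring

lemma Bfun_zero (hn0 : 0 < n) (hA : IsYoung A) : Bfun n A 0 = 0 := by
  by_cases h1 : n = 1
  · simp [Bfun, h1, hA.zero]
  · have hn : 2 ≤ n := by omega
    rw [Bfun, if_neg h1]
    show youngConj (Efun n A) 0 = 0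
    apply le_antisymm
    · apply Real.sSup_le _ le_rfl
      rintro y ⟨τ, hτ, rfl⟩
      simp only
      have := Efun_nonneg (n := n) A hA.zero (Set.mem_Ici.1 hτ)
      linarith
    · apply aux_sSup_nonneg
      have h0 : (0:ℝ) ∈ Set.Ici (0:ℝ) := Set.self_mem_Ici
      have := Set.mem_image_of_mem (fun τ => τ * 0 - Efun n A τ) h0
      simpa [Efun_zero A hn] using this

lemma Bfun_nonneg (hn0 : 0 < n) (hA : IsYoung A) {s : ℝ} (hs : 0 ≤ s) :
    0 ≤ Bfun n A s := by
  by_cases h1 : n = 1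
  · simp only [Bfun, h1, if_pos]
    exact hA.nonneg s hs
  · have hn : 2 ≤ n := by omega
    rw [Bfun, if_neg h1]
    apply aux_sSup_nonneg
    have h0 : (0:ℝ) ∈ Set.Ici (0:ℝ) := Set.self_mem_Ici
    have := Set.mem_image_of_mem (fun τ => τ * s - Efun n A τ) h0
    simpa [Efun, Real.zero_rpow (ne_of_gt (conjExp_pos hn))] using this

lemma Bfun_scale (hn0 : 0 < n) (hA : IsYoung A) {Binv : ℝ → ℝ}
    (hBinv : IsInvOn0 (Bfun n A) Binv) {x μ : ℝ} (hx : 0 ≤ x) (hμ : 1 ≤ μ) :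
    μ ^ n * Bfun n A x ≤ Bfun n A (μ * x) := by
  have hμ0 : (0:ℝ) < μ := lt_of_lt_of_le one_pos hμ
  by_cases h1 : n = 1
  · subst h1
    have hBA : Bfun 1 A = A := by simp [Bfun]
    simp only [hBA, pow_one]
    have hmem1 : μ * x ∈ Set.Ici (0:ℝ) := Set.mem_Ici.2 (by positivity)
    have hmem0 : (0:ℝ) ∈ Set.Ici (0:ℝ) := Set.self_mem_Ici
    have ha' : (0:ℝ) ≤ 1/μ := by positivity
    have hb' : (0:ℝ) ≤ 1 - 1/μ := by
      rw [sub_nonneg]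
      exact div_le_one_of_le₀ hμ hμ0.le
    have hab' : 1/μ + (1 - 1/μ) = 1 := by ring
    have hc := hA.convexOn.2 hmem1 hmem0 ha' hb' hab' 
    simp only [smul_eq_mul, mul_zero, add_zero, hA.zero] at hc
    have hxx : 1/μ * (μ * x) = x := by field_simp
    rw [hxx] at hc
    have h6 : μ * A x ≤ μ * (1/μ * A (μ * x)) := mul_le_mul_of_nonneg_left hc hμ0.le
    have h7 : μ * (1/μ * A (μ * x)) = A (μ * x) := by field_simp
    linarith
  · have hn : 2 ≤ n := by omega
    by_cases hx0 : x = 0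
    · subst hx0
      rw [mul_zero, Bfun_zero A hn0 hA, mul_zero]
    · have hxp : 0 < x := lt_of_le_of_ne hx (Ne.symm hx0)
      have hμx : 0 < μ * x := by positivity
      rw [Bfun, if_neg h1]
      show μ ^ n * youngConj (Efun n A) x ≤ youngConj (Efun n A) (μ * x)
      have hBdd : BddAbove ((fun τ => τ * (μ * x) - Efun n A τ) '' Set.Ici 0) := by
        by_contra hnb
        have hB0 : Bfun n A (μ * x) = 0 := by
          rw [Bfun, if_neg h1]
          exact Real.sSup_of_not_bddAbove hnb
        have h1' := hBinv.2 (μ * x) hμx.le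
        have h2' := hBinv.2 0 le_rfl
        rw [hB0] at h1'
        rw [Bfun_zero A hn0 hA] at h2'
        rw [h2'] at h1'
        exact absurd h1'.symm (ne_of_gt hμx)
      have hμn : (0:ℝ) < μ ^ n := by positivity
      rw [← le_div_iff₀' hμn]
      apply csSup_le (Set.Nonempty.image _ Set.nonempty_Ici)
      rintro y ⟨σ, hσ, rfl⟩
      rw [le_div_iff₀' hμn]
      have hσ0 : (0:ℝ) ≤ σ := Set.mem_Ici.1 hσ
      have hmem : (μ ^ (n-1) * σ) * (μ * x) - Efun n A (μ ^ (n-1) * σ) ∈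
          ((fun τ => τ * (μ * x) - Efun n A τ) '' Set.Ici 0) :=
        ⟨μ ^ (n-1) * σ, Set.mem_Ici.2 (by positivity), rfl⟩
      have hE := Efun_scale A hn hA.zero hσ0 hμ
      have hpow : (μ ^ (n-1) * σ) * (μ * x) = μ ^ n * (σ * x) := by
        have h5 : μ ^ (n-1) * μ = μ ^ n := by
          rw [← pow_succ]
          congr 1
          omega
        linear_combination (σ * x) * h5
      calc μ ^ n * (σ * x - Efun n A σ)
          = μ ^ n * (σ * x) - μ ^ n * Efun n A σ := by ring
        _ ≤ (μ ^ (n-1) * σ) * (μ * x) - Efun n A (μ ^ (n-1) * σ) := by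
            rw [hpow]; linarith
        _ ≤ sSup ((fun τ => τ * (μ * x) - Efun n A τ) '' Set.Ici 0) := le_csSup hBdd hmem

end Aux2

/-- Lemma `lemma2`. -/
theorem statement15
    (n : ℕ) (hn : 0 < n)
    (A : ℝ → ℝ) (hA : IsYoung A) (hC : CondC n A) (hC0 : CondC0 n A)
    (φ : ℝ → ℝ) (hφ : IsGauge n φ)
    (Binv : ℝ → ℝ) (hBinv : IsInvOn0 (Bfun n A) Binv)
    (Jinv : ℝ → ℝ) (hJinv : IsInvOn0 (Jfun n Binv φ) Jinv)
    (ψ : ℝ → ℝ) (hψ : ∀ r, ψ r = φ (Jinv r)) :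
    ∀ s t : ℝ, 0 < s → 0 < t → ψ (s * t) ≤ φ t + t ^ n * Bfun n A s := by
  intro s t hs ht
  set u := Jinv (s * t) with hu
  have hst : 0 ≤ s * t := (mul_pos hs ht).le
  have hu0 : 0 ≤ u := (hJinv.1 _ hst).1
  have hJu : Jfun n Binv φ u = s * t := (hJinv.1 _ hst).2
  rw [hψ]
  have hBs : 0 ≤ Bfun n A s := Bfun_nonneg A hn hA hs.le
  have hφt : 0 ≤ φ t := by
    have := hφ.strictMonoOn Set.self_mem_Ici (Set.mem_Ici.2 ht.le) ht
    rw [hφ.zero] at this; exact this.le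
  rcases le_or_gt u t with h | h
  · have h1 : φ u ≤ φ t := by
      rcases eq_or_lt_of_le h with heq | hlt
      · rw [heq]
      · exact (hφ.strictMonoOn (Set.mem_Ici.2 hu0) (Set.mem_Ici.2 ht.le) hlt).le
    nlinarith [pow_pos ht n]
  · have hupos : 0 < u := lt_trans ht h
    have hune : u ≠ 0 := ne_of_gt hupos
    rw [Jfun, if_neg hune] at hJu
    have hφu : 0 < φ u := by
      have := hφ.strictMonoOn Set.self_mem_Ici (Set.mem_Ici.2 hupos.le) hupos
      rwa [hφ.zero] at this
    have hun : (0:ℝ) < u ^ n := pow_pos hupos n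
    have hxnn : 0 ≤ φ u / u ^ n := by positivity
    have hB : Bfun n A (Binv (φ u / u ^ n)) = φ u / u ^ n := (hBinv.1 _ hxnn).2
    have hBval : Binv (φ u / u ^ n) = s * t / u := by
      field_simp
      linarith [hJu]
    rw [hBval] at hB
    have hxnn2 : 0 ≤ s * t / u := by positivity
    have hμ1 : 1 ≤ u / t := (one_le_div ht).2 h.le
    have hkey := Bfun_scale A hn hA hBinv hxnn2 hμ1
    have hμx : (u / t) * (s * t / u) = s := by field_simp
    rw [hμx, hB] at hkey
    have h3 : φ u ≤ t ^ n * Bfun n A s := by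
      have h4 : (u / t) ^ n * (φ u / u ^ n) = φ u / t ^ n := by
        rw [div_pow]
        field_simp
      rw [h4, div_le_iff₀ (pow_pos ht n)] at hkey
      linarith [hkey]
    linarith
end

section
/- Let h:(0,∞)→(0,∞) be a non-decreasing continuous function and let Θ be any of the scaling functions Θ_h^0, Θ_h^∞, Θ_h. Then either lim_{r→0⁺} Θ(r) = 0, or Θ(r) = 1 for every r ∈ (0,1]. -/
open MeasureTheory Filter Set Topology ENNReal

section DichotomyAux

open Filter

lemma dichotomy_aux (Θ : ℝ → ℝ)
    (hmono : ∀ r r', 0 < r → r ≤ r' → r' ≤ 1 → Θ r ≤ Θ r')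
    (hnn : ∀ r, 0 < r → r ≤ 1 → 0 ≤ Θ r)
    (hle1 : ∀ r, 0 < r → r ≤ 1 → Θ r ≤ 1)
    (hsub : ∀ r₁ r₂, 0 < r₁ → r₁ ≤ 1 → 0 < r₂ → r₂ ≤ 1 → Θ (r₁ * r₂) ≤ Θ r₁ * Θ r₂) :
    Tendsto Θ (𝓝[>] (0:ℝ)) (𝓝 0) ∨ ∀ r, 0 < r → r ≤ 1 → Θ r = 1 := by
  by_cases hall : ∀ r, 0 < r → r ≤ 1 → Θ r = 1
  · exact Or.inr hall
  left
  push_neg at hall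
  obtain ⟨r₀, hr₀, hr₀1, hne⟩ := hall
  have hlt : Θ r₀ < 1 := lt_of_le_of_ne (hle1 _ hr₀ hr₀1) hne
  have hnn0 : 0 ≤ Θ r₀ := hnn _ hr₀ hr₀1
  have hpowle : ∀ k : ℕ, Θ (r₀ ^ (k + 1)) ≤ Θ r₀ ^ (k + 1) := by
    intro k
    induction k with
    | zero => simpa using le_refl (Θ r₀)
    | succ k ih =>
      have hp1 : (0:ℝ) < r₀ ^ (k + 1) := pow_pos hr₀ _
      have hp2 : r₀ ^ (k + 1) ≤ 1 := pow_le_one₀ hr₀.le hr₀1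
      calc Θ (r₀ ^ (k + 2)) = Θ (r₀ * r₀ ^ (k + 1)) := by ring_nf
        _ ≤ Θ r₀ * Θ (r₀ ^ (k + 1)) := hsub _ _ hr₀ hr₀1 hp1 hp2
        _ ≤ Θ r₀ * Θ r₀ ^ (k + 1) := mul_le_mul_of_nonneg_left ih hnn0
        _ = Θ r₀ ^ (k + 2) := by ring
  rw [Metric.tendsto_nhdsWithin_nhds]
  intro ε hε
  have htd : Tendsto (fun k : ℕ => Θ r₀ ^ k) atTop (𝓝 0) :=
    tendsto_pow_atTop_nhds_zero_of_lt_one hnn0 hlt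
  obtain ⟨k, hk⟩ := (htd.eventually (gt_mem_nhds hε)).exists
  refine ⟨r₀ ^ (k + 1), pow_pos hr₀ _, ?_⟩
  intro r hr hdist
  have hrlt : r < r₀ ^ (k + 1) := by
    rw [Real.dist_eq, sub_zero, abs_of_pos hr] at hdist; exact hdist
  have hp2 : r₀ ^ (k + 1) ≤ 1 := pow_le_one₀ hr₀.le hr₀1
  have h1 : Θ r ≤ Θ (r₀ ^ (k + 1)) := hmono _ _ hr hrlt.le hp2
  have h3 : Θ r₀ ^ (k + 1) ≤ Θ r₀ ^ k := pow_le_pow_of_le_one hnn0 hlt.le (Nat.le_succ k)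
  have h4 : 0 ≤ Θ r := hnn _ hr (le_trans hrlt.le hp2)
  rw [Real.dist_eq, sub_zero, abs_of_nonneg h4]
  have := hpowle k
  linarith

lemma limsup_dichotomy (h : ℝ → ℝ) (hpos : ∀ t, 0 < t → 0 < h t)
    (hmono : MonotoneOn h (Set.Ioi 0)) (l : Filter ℝ) [l.NeBot]
    (hl : ∀ᶠ t in l, 0 < t)
    (hscale : ∀ r : ℝ, 0 < r → Tendsto (fun t => r * t) l l) :
    Tendsto (fun r => limsup (fun t => h (r * t) / h t) l) (𝓝[>] (0:ℝ)) (𝓝 0) ∨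
      ∀ r, 0 < r → r ≤ 1 → limsup (fun t => h (r * t) / h t) l = 1 := by
  set Θ : ℝ → ℝ := fun r => limsup (fun t => h (r * t) / h t) l with hΘ
  have hub : ∀ r, 0 < r → r ≤ 1 → ∀ᶠ t in l, h (r * t) / h t ≤ 1 := by
    intro r hr hr1
    filter_upwards [hl] with t ht
    rw [div_le_one (hpos t ht)]
    exact hmono (by simp only [Set.mem_Ioi]; positivity) ht (by nlinarith)
  have hlb : ∀ r, 0 < r → ∀ᶠ t in l, 0 ≤ h (r * t) / h t := by
    intro r hr
    filter_upwards [hl] with t ht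
    exact div_nonneg (hpos _ (by positivity)).le (hpos _ ht).le
  have hbdd : ∀ r, 0 < r → r ≤ 1 → IsBoundedUnder (· ≤ ·) l (fun t => h (r * t) / h t) :=
    fun r hr hr1 => ⟨1, by simpa [eventually_map] using hub r hr hr1⟩
  have hcob : ∀ r, 0 < r → IsCoboundedUnder (· ≤ ·) l (fun t => h (r * t) / h t) := by
    intro r hr
    exact IsBoundedUnder.isCoboundedUnder_le ⟨0, by simpa [eventually_map] using hlb r hr⟩
  have hnn : ∀ r, 0 < r → r ≤ 1 → 0 ≤ Θ r := by
    intro r hr hr1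
    exact le_limsup_of_frequently_le ((hlb r hr).frequently) (hbdd r hr hr1)
  have hle1 : ∀ r, 0 < r → r ≤ 1 → Θ r ≤ 1 := by
    intro r hr hr1
    exact limsup_le_of_le (hcob r hr) (hub r hr hr1)
  have hmonoΘ : ∀ r r', 0 < r → r ≤ r' → r' ≤ 1 → Θ r ≤ Θ r' := by
    intro r r' hr hrr hr'1
    have hr' : 0 < r' := lt_of_lt_of_le hr hrr
    refine limsup_le_limsup ?_ (hcob r hr) (hbdd r' hr' hr'1)
    filter_upwards [hl] with t ht
    exact (div_le_div_iff_of_pos_right (hpos t ht)).mpr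
      (hmono (by simp only [Set.mem_Ioi]; positivity)
        (by simp only [Set.mem_Ioi]; positivity) (by nlinarith))
  have hsub : ∀ r₁ r₂, 0 < r₁ → r₁ ≤ 1 → 0 < r₂ → r₂ ≤ 1 → Θ (r₁ * r₂) ≤ Θ r₁ * Θ r₂ := by
    intro r₁ r₂ h1 h11 h2 h21
    have hA : 0 ≤ Θ r₁ := hnn _ h1 h11
    have hB : 0 ≤ Θ r₂ := hnn _ h2 h21
    have hA1 : Θ r₁ ≤ 1 := hle1 _ h1 h11
    have hB1 : Θ r₂ ≤ 1 := hle1 _ h2 h21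
    have key : ∀ ε : ℝ, 0 < ε → Θ (r₁ * r₂) ≤ (Θ r₁ + ε) * (Θ r₂ + ε) := by
      intro ε hε
      have e1 : ∀ᶠ s in l, h (r₁ * s) / h s < Θ r₁ + ε :=
        eventually_lt_of_limsup_lt (by linarith) (hbdd r₁ h1 h11)
      have e1' : ∀ᶠ t in l, h (r₁ * (r₂ * t)) / h (r₂ * t) < Θ r₁ + ε :=
        (hscale r₂ h2).eventually e1
      have e2 : ∀ᶠ t in l, h (r₂ * t) / h t < Θ r₂ + ε :=
        eventually_lt_of_limsup_lt (by linarith) (hbdd r₂ h2 h21)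
      refine limsup_le_of_le (hcob _ (by positivity)) ?_
      filter_upwards [e1', e2, hl] with t ht1 ht2 ht
      have hr2t : (0:ℝ) < r₂ * t := by positivity
      have heq : h (r₁ * r₂ * t) / h t
          = h (r₁ * (r₂ * t)) / h (r₂ * t) * (h (r₂ * t) / h t) := by
        rw [mul_assoc]
        exact (div_mul_div_cancel₀ (hpos _ hr2t).ne').symm
      rw [heq]
      have hnn2 : 0 ≤ h (r₂ * t) / h t := div_nonneg (hpos _ hr2t).le (hpos _ ht).le
      exact mul_le_mul ht1.le ht2.le hnn2 (by linarith)
    refine le_of_forall_pos_le_add ?_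
    intro δ hδ
    have hε : (0:ℝ) < min 1 (δ / 3) := lt_min one_pos (by linarith)
    have h1' : min 1 (δ / 3) ≤ 1 := min_le_left _ _
    have h2' : min 1 (δ / 3) ≤ δ / 3 := min_le_right _ _
    calc Θ (r₁ * r₂) ≤ (Θ r₁ + min 1 (δ / 3)) * (Θ r₂ + min 1 (δ / 3)) := key _ hε
      _ ≤ Θ r₁ * Θ r₂ + δ := by nlinarith
  exact dichotomy_aux Θ hmonoΘ hnn hle1 hsub

lemma thetaSup_dichotomy (h : ℝ → ℝ) (hpos : ∀ t, 0 < t → 0 < h t)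
    (hmono : MonotoneOn h (Set.Ioi 0)) :
    Tendsto (ThetaSup h) (𝓝[>] (0:ℝ)) (𝓝 0) ∨ ∀ r, 0 < r → r ≤ 1 → ThetaSup h r = 1 := by
  have hne : ∀ r : ℝ, ((fun t => h (r * t) / h t) '' Set.Ioi 0).Nonempty :=
    fun r => ⟨h (r * 1) / h 1, ⟨1, by norm_num, rfl⟩⟩
  have hubd : ∀ r, 0 < r → r ≤ 1 →
      ∀ x ∈ (fun t => h (r * t) / h t) '' Set.Ioi 0, x ≤ 1 := by
    rintro r hr hr1 x ⟨t, ht, rfl⟩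
    simp only [Set.mem_Ioi] at ht
    rw [div_le_one (hpos t ht)]
    exact hmono (by simp only [Set.mem_Ioi]; positivity) ht (by nlinarith)
  have hbdd : ∀ r, 0 < r → r ≤ 1 → BddAbove ((fun t => h (r * t) / h t) '' Set.Ioi 0) :=
    fun r hr hr1 => ⟨1, fun x hx => hubd r hr hr1 x hx⟩
  have hnn : ∀ r, 0 < r → r ≤ 1 → 0 ≤ ThetaSup h r := by
    intro r hr hr1
    have hmem : h (r * 1) / h 1 ∈ (fun t => h (r * t) / h t) '' Set.Ioi 0 :=
      ⟨1, by norm_num, rfl⟩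
    have h0 : 0 ≤ h (r * 1) / h 1 :=
      div_nonneg (hpos _ (by norm_num; positivity)).le (hpos _ one_pos).le
    exact le_trans h0 (le_csSup (hbdd r hr hr1) hmem)
  have hle1 : ∀ r, 0 < r → r ≤ 1 → ThetaSup h r ≤ 1 :=
    fun r hr hr1 => csSup_le (hne r) (hubd r hr hr1)
  have hmonoΘ : ∀ r r', 0 < r → r ≤ r' → r' ≤ 1 → ThetaSup h r ≤ ThetaSup h r' := by
    intro r r' hr hrr hr'1
    have hr' : 0 < r' := lt_of_lt_of_le hr hrr
    refine csSup_le (hne r) ?_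
    rintro x ⟨t, ht, rfl⟩
    simp only [Set.mem_Ioi] at ht
    have step : h (r * t) / h t ≤ h (r' * t) / h t :=
      (div_le_div_iff_of_pos_right (hpos t ht)).mpr
        (hmono (by simp only [Set.mem_Ioi]; positivity)
          (by simp only [Set.mem_Ioi]; positivity) (by nlinarith))
    exact step.trans (le_csSup (hbdd r' hr' hr'1) ⟨t, ht, rfl⟩)
  have hsub : ∀ r₁ r₂, 0 < r₁ → r₁ ≤ 1 → 0 < r₂ → r₂ ≤ 1 →
      ThetaSup h (r₁ * r₂) ≤ ThetaSup h r₁ * ThetaSup h r₂ := by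
    intro r₁ r₂ h1 h11 h2 h21
    have hB : 0 ≤ ThetaSup h r₂ := hnn _ h2 h21
    refine csSup_le (hne _) ?_
    rintro x ⟨t, ht, rfl⟩
    simp only [Set.mem_Ioi] at ht
    have hr2t : (0:ℝ) < r₂ * t := by positivity
    have heq : h (r₁ * r₂ * t) / h t
        = h (r₁ * (r₂ * t)) / h (r₂ * t) * (h (r₂ * t) / h t) := by
      rw [mul_assoc]
      exact (div_mul_div_cancel₀ (hpos _ hr2t).ne').symm
    show h (r₁ * r₂ * t) / h t ≤ ThetaSup h r₁ * ThetaSup h r₂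
    rw [heq]
    have hle1' : h (r₁ * (r₂ * t)) / h (r₂ * t) ≤ ThetaSup h r₁ :=
      le_csSup (hbdd r₁ h1 h11) ⟨r₂ * t, hr2t, rfl⟩
    have hle2 : h (r₂ * t) / h t ≤ ThetaSup h r₂ :=
      le_csSup (hbdd r₂ h2 h21) ⟨t, ht, rfl⟩
    have hnn2 : 0 ≤ h (r₂ * t) / h t := div_nonneg (hpos _ hr2t).le (hpos _ ht).le
    have hnn1 : 0 ≤ ThetaSup h r₁ := hnn _ h1 h11
    exact mul_le_mul hle1' hle2 hnn2 hnn1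
  exact dichotomy_aux (ThetaSup h) hmonoΘ hnn hle1 hsub

end DichotomyAux

/-- Corollary `dicotomy`. -/
theorem statement17
    (h : ℝ → ℝ) (hpos : ∀ t, 0 < t → 0 < h t)
    (hmono : MonotoneOn h (Set.Ioi 0)) (hcont : ContinuousOn h (Set.Ioi 0)) :
    (Tendsto (Theta0 h) (𝓝[>] (0:ℝ)) (𝓝 0) ∨ ∀ r, 0 < r → r ≤ 1 → Theta0 h r = 1) ∧
    (Tendsto (ThetaInf h) (𝓝[>] (0:ℝ)) (𝓝 0) ∨ ∀ r, 0 < r → r ≤ 1 → ThetaInf h r = 1) ∧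
    (Tendsto (ThetaSup h) (𝓝[>] (0:ℝ)) (𝓝 0) ∨ ∀ r, 0 < r → r ≤ 1 → ThetaSup h r = 1) := by
  refine ⟨?_, ?_, ?_⟩
  · have := limsup_dichotomy h hpos hmono (𝓝[>] (0:ℝ)) self_mem_nhdsWithin ?_
    · exact this
    · intro r hr
      refine tendsto_nhdsWithin_of_tendsto_nhds_of_eventually_within _ ?_ ?_
      · have : Tendsto (fun t : ℝ => r * t) (𝓝 0) (𝓝 (r * 0)) :=
          (tendsto_id.const_mul r)
        simpa using this.mono_left nhdsWithin_le_nhds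
      · filter_upwards [self_mem_nhdsWithin] with t ht
        exact Set.mem_Ioi.mpr (mul_pos hr ht)
  · exact limsup_dichotomy h hpos hmono atTop (eventually_gt_atTop 0)
      (fun r hr => Tendsto.const_mul_atTop hr tendsto_id)
  · exact thetaSup_dichotomy h hpos hmono
end

section
/- Let n ∈ ℕ, let A be a Young function satisfying conditions (C) and (C₀), with associated function B, let φ be a gauge function with lim_{r→0⁺} φ(r)/r^n = ∞, and let ψ(r)=φ(J^{−1}(r)). For r>0 let J_r(s) = s·B^{−1}(rφ(s)/s^n) for s>0, J_r(0)=0. Then for every r > 0: liminf_{t→0⁺} φ(J_r^{−1}(t))/ψ(t) ≥ 1/Θ_ψ^0(Θ_{B^{−1}}^∞(r)^+), and inf_{t>0} φ(J_r^{−1}(t))/ψ(t) ≥ 1/Θ_ψ(Θ_{B^{−1}}(r)^+). -/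
open MeasureTheory Filter Set Topology ENNReal

/-! ### Auxiliary lemmas for statement18 -/

namespace Aux18

open MeasureTheory Filter Set Topology ENNReal

lemma youngConj_nonneg {A : ℝ → ℝ} (hA0 : A 0 = 0) (t : ℝ) : 0 ≤ youngConj A t := by
  refine Real.sSup_nonneg' ⟨0 * t - A 0, ⟨0, self_mem_Ici, rfl⟩, by simp [hA0]⟩

lemma youngConj_le_of_bdd {A : ℝ → ℝ} {s₁ s₂ M : ℝ} (h : s₁ ≤ s₂)
    (hb : ∀ τ : ℝ, 0 ≤ τ → τ * s₂ - A τ ≤ M) (hM : 0 ≤ M) :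
    youngConj A s₁ ≤ M := by
  apply Real.sSup_le _ hM
  rintro x ⟨τ, hτ, rfl⟩
  calc τ * s₁ - A τ ≤ τ * s₂ - A τ := by nlinarith [hτ.out]
    _ ≤ M := hb τ hτ

/-- the integral `I t = ∫_{Ioi t} Ã(s)/s^{1+np}` is antitone on `(0,∞)`
(with junk-value conventions). -/
lemma I_antitone {A : ℝ → ℝ} (hA0 : A 0 = 0) {np : ℝ} (hnp : 0 ≤ np) {p q : ℝ} (hp : 0 < p) (hpq : p ≤ q) :
    (∫ s in Set.Ioi q, youngConj A s / s ^ (1 + np)) ≤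
      ∫ s in Set.Ioi p, youngConj A s / s ^ (1 + np) := by
  set f : ℝ → ℝ := fun s => youngConj A s / s ^ (1 + np) with hf
  have hf_nonneg : ∀ s : ℝ, 0 < s → 0 ≤ f s := fun s hs =>
    div_nonneg (youngConj_nonneg hA0 s) (Real.rpow_nonneg hs.le _)
  by_cases hint : IntegrableOn f (Set.Ioi p) volume
  · refine setIntegral_mono_set hint ?_
      (HasSubset.Subset.eventuallyLE fun x hx => lt_of_le_of_lt hpq hx)
    filter_upwards [MeasureTheory.ae_restrict_mem measurableSet_Ioi] with s hs
    exact hf_nonneg s (hp.trans hs)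
  · have hIp : (∫ s in Set.Ioi p, f s) = 0 := integral_undef hint
    by_cases hbb : ∃ s₂, q < s₂ ∧ BddAbove ((fun τ => τ * s₂ - A τ) '' Set.Ici 0)
    · obtain ⟨s₂, hqs₂, hb₂⟩ := hbb
      set M := youngConj A s₂ with hM
      have hM0 : 0 ≤ M := youngConj_nonneg hA0 s₂
      have hA2le : ∀ s, s ≤ s₂ → youngConj A s ≤ M :=
        fun s hs => youngConj_le_of_bdd hs (fun τ hτ => le_csSup hb₂ ⟨τ, hτ, rfl⟩) hM0
      have hA2mono : ∀ s t : ℝ, s ≤ t → t ≤ s₂ → youngConj A s ≤ youngConj A t := by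
        intro s t hst hts₂
        refine youngConj_le_of_bdd hst (fun τ hτ => le_csSup ?_ ⟨τ, hτ, rfl⟩)
          (youngConj_nonneg hA0 t)
        obtain ⟨b, hb⟩ := hb₂
        refine ⟨b, ?_⟩
        rintro x ⟨τ, hτ, rfl⟩
        calc τ * t - A τ ≤ τ * s₂ - A τ := by nlinarith [hτ.out]
          _ ≤ b := hb ⟨τ, hτ, rfl⟩
      set G : ℝ → ℝ := fun s => youngConj A (min s s₂) with hG
      have hGmono : Monotone G := fun s t hst =>
        hA2mono _ _ (min_le_min_right _ hst) (min_le_right _ _)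
      have hGmeas : Measurable G := hGmono.measurable
      have hfmeas : Measurable (fun s : ℝ => G s / s ^ (1 + np)) :=
        hGmeas.div (measurable_id.pow_const _)
      have hfIoc : IntegrableOn f (Set.Ioc p q) volume := by
        have hmeasf : AEStronglyMeasurable f (volume.restrict (Set.Ioc p q)) := by
          refine hfmeas.aestronglyMeasurable.congr ?_
          filter_upwards [MeasureTheory.ae_restrict_mem measurableSet_Ioc] with s hs
          have hmin : min s s₂ = s := min_eq_left (hs.2.trans hqs₂.le)
          simp only [hG, hmin, hf]
        refine MeasureTheory.Integrable.mono' (g := fun _ => M / p ^ (1 + np))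
          (integrableOn_const measure_Ioc_lt_top.ne enorm_ne_top) hmeasf ?_
        filter_upwards [MeasureTheory.ae_restrict_mem measurableSet_Ioc] with s hs
        have hsp : p < s := hs.1
        have h1 : 0 ≤ f s := hf_nonneg s (hp.trans hsp)
        rw [Real.norm_eq_abs, abs_of_nonneg h1]
        exact div_le_div₀ hM0 (hA2le s (hs.2.trans hqs₂.le)) (Real.rpow_pos_of_pos hp _)
          (Real.rpow_le_rpow hp.le hsp.le (by linarith))
      by_cases hq2 : IntegrableOn f (Set.Ioi q) volume
      · exact absurd (by rw [← Set.Ioc_union_Ioi_eq_Ioi hpq]; exact hfIoc.union hq2) hint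
      · rw [hIp, integral_undef hq2]
    · push_neg at hbb
      have hzero : ∀ s ∈ Set.Ioi q, f s = 0 := by
        intro s hs
        rw [hf]
        simp only
        rw [show youngConj A s = 0 from Real.sSup_of_not_bddAbove (hbb s hs), zero_div]
      rw [hIp, setIntegral_congr_fun measurableSet_Ioi hzero, integral_zero]

/-- Facts about the inverse `Binv` of the Young function `B`. -/
structure BF (n : ℕ) (Binv : ℝ → ℝ) : Prop where
  zero : Binv 0 = 0
  nonneg : ∀ t, 0 ≤ t → 0 ≤ Binv t
  pos : ∀ t, 0 < t → 0 < Binv t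
  mono : ∀ t₁ t₂, 0 ≤ t₁ → t₁ ≤ t₂ → Binv t₁ ≤ Binv t₂
  superhom : ∀ u l, 0 ≤ u → 1 ≤ l → Binv (l * u) ≤ l * Binv u
  scale : ∀ y l, 0 < y → 1 ≤ l → Binv y ≤ l * Binv (y / l ^ n)

section BFacts

variable {n : ℕ} {A : ℝ → ℝ} {Binv : ℝ → ℝ}

section nge2
variable (hn1 : n ≠ 1) (hn : 0 < n) (hA : IsYoung A)

lemma two_le (hn1 : n ≠ 1) (hn : 0 < n) : 2 ≤ n := by omega

lemma conjExp_pos (hn1 : n ≠ 1) (hn : 0 < n) : 0 < conjExp n := by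
  have h2 : (2:ℝ) ≤ (n:ℝ) := by exact_mod_cast two_le hn1 hn
  exact div_pos (by linarith) (by linarith)

/-- The function `E` whose Young conjugate is `B` when `n ≥ 2`. -/
noncomputable def Efn (n : ℕ) (A : ℝ → ℝ) : ℝ → ℝ :=
  fun t => t ^ conjExp n * ∫ s in Set.Ioi t, youngConj A s / s ^ (1 + conjExp n)

lemma Bfun_eq (hn1 : n ≠ 1) : Bfun n A = youngConj (Efn n A) := by
  rw [Bfun, if_neg hn1]; rfl

lemma E_zero (hn1 : n ≠ 1) (hn : 0 < n) : Efn n A 0 = 0 := by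
  rw [Efn, Real.zero_rpow (ne_of_gt (conjExp_pos hn1 hn)), zero_mul]

lemma E_nonneg (hn1 : n ≠ 1) (hn : 0 < n) (hA : IsYoung A) {τ : ℝ} (hτ : 0 ≤ τ) :
    0 ≤ Efn n A τ := by
  rw [Efn]
  refine mul_nonneg (Real.rpow_nonneg hτ _) (setIntegral_nonneg measurableSet_Ioi ?_)
  intro s hs
  exact div_nonneg (youngConj_nonneg hA.zero s) (Real.rpow_nonneg ((hτ.trans_lt hs).le) _)

lemma pow_conjExp (hn1 : n ≠ 1) (hn : 0 < n) {l : ℝ} (hl : 1 ≤ l) :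
    ((l ^ (n-1) : ℝ)) ^ conjExp n = l ^ n := by
  have hl0 : (0:ℝ) < l := lt_of_lt_of_le one_pos hl
  have h2 : (2:ℝ) ≤ (n:ℝ) := by exact_mod_cast two_le hn1 hn
  rw [← Real.rpow_natCast l (n-1), ← Real.rpow_natCast l n,
    ← Real.rpow_mul hl0.le]
  congr 1
  have h2' : (n:ℝ) - 1 ≠ 0 := by linarith
  rw [Nat.cast_sub (show 1 ≤ n from hn), Nat.cast_one, conjExp]
  field_simp

lemma E_scale (hn1 : n ≠ 1) (hn : 0 < n) (hA : IsYoung A) {τ l : ℝ} (hτ : 0 ≤ τ) (hl : 1 ≤ l) :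
    Efn n A (l ^ (n-1) * τ) ≤ l ^ n * Efn n A τ := by
  have hl0 : (0:ℝ) < l := lt_of_lt_of_le one_pos hl
  rcases eq_or_lt_of_le hτ with rfl | hτpos
  · simp [Efn, Real.zero_rpow (ne_of_gt (conjExp_pos hn1 hn))]
  · have hpow1 : (1:ℝ) ≤ l ^ (n-1) := one_le_pow₀ hl
    have hττ' : τ ≤ l ^ (n-1) * τ := le_mul_of_one_le_left hτ hpow1
    have hI := I_antitone (A := A) hA.zero (conjExp_pos hn1 hn).le hτpos hττ'
    rw [Efn]
    have hmul : (l ^ (n-1) * τ) ^ conjExp n = l ^ n * τ ^ conjExp n := by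
      rw [Real.mul_rpow (by positivity) hτ, pow_conjExp hn1 hn hl]
    rw [hmul, mul_assoc, Efn]
    refine mul_le_mul_of_nonneg_left ?_ (by positivity)
    exact mul_le_mul_of_nonneg_left hI (Real.rpow_nonneg hτ _)

end nge2

variable (hn : 0 < n) (hA : IsYoung A) (hBinv : IsInvOn0 (Bfun n A) Binv)

lemma Bfun_zero (hn : 0 < n) (hA : IsYoung A) : Bfun n A 0 = 0 := by
  by_cases hn1 : n = 1
  · rw [Bfun, if_pos hn1]; exact hA.zero
  · rw [Bfun_eq hn1, youngConj]
    have hbdd : BddAbove ((fun τ => τ * 0 - Efn n A τ) '' Set.Ici 0) := by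
      refine ⟨0, ?_⟩
      rintro x ⟨τ, hτ, rfl⟩
      have := E_nonneg (A := A) hn1 hn hA hτ.out
      simp only [zero_mul, mul_zero]
      linarith
    refine le_antisymm (Real.sSup_le ?_ le_rfl) ?_
    · rintro x ⟨τ, hτ, rfl⟩
      have := E_nonneg (A := A) hn1 hn hA hτ.out
      simp only [mul_zero, zero_sub]
      linarith
    · refine le_csSup hbdd ⟨0, self_mem_Ici, ?_⟩
      simp [E_zero (A := A) hn1 hn]

lemma Bfun_nonneg (hn : 0 < n) (hA : IsYoung A) {s : ℝ} (hs : 0 ≤ s) : 0 ≤ Bfun n A s := by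
  by_cases hn1 : n = 1
  · rw [Bfun, if_pos hn1]; exact hA.nonneg s hs
  · rw [Bfun_eq hn1]
    exact youngConj_nonneg (E_zero hn1 hn) s

/-- the key convexity inequality at `Binv` points -/
lemma Bfun_cone (hn : 0 < n) (hA : IsYoung A) (hBinv : IsInvOn0 (Bfun n A) Binv)
    {y μ : ℝ} (hy : 0 < y) (hμ0 : 0 ≤ μ) (hμ1 : μ ≤ 1) :
    Bfun n A (μ * Binv y) ≤ μ * y := by
  obtain ⟨ha0, hay⟩ := hBinv.1 y hy.le
  by_cases hn1 : n = 1
  · rw [Bfun, if_pos hn1] at hay ⊢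
    have := hA.convexOn.2 (Set.mem_Ici.2 ha0) (Set.self_mem_Ici) hμ0 (by linarith)
      (by ring : μ + (1 - μ) = 1)
    simp only [smul_eq_mul, mul_zero, add_zero, hA.zero] at this
    rw [hay] at this
    linarith
  · rw [Bfun_eq hn1] at hay ⊢
    have hay' : sSup ((fun τ => τ * Binv y - Efn n A τ) '' Set.Ici 0) = y := hay
    have hbdd : BddAbove ((fun τ => τ * Binv y - Efn n A τ) '' Set.Ici 0) := by
      by_contra hcon
      rw [Real.sSup_of_not_bddAbove hcon] at hay'
      exact absurd hay'.symm (ne_of_gt hy)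
    rw [youngConj]
    refine Real.sSup_le ?_ (mul_nonneg hμ0 hy.le)
    rintro x ⟨τ, hτ, rfl⟩
    have h1 : τ * Binv y - Efn n A τ ≤ y := by
      have := le_csSup hbdd (Set.mem_image_of_mem _ hτ)
      rw [hay'] at this
      exact this
    have h2 : 0 ≤ Efn n A τ := E_nonneg hn1 hn hA hτ.out
    simp only
    nlinarith [hτ.out]

/-- the key scaling inequality at `Binv` points -/
lemma Bfun_scale (hn : 0 < n) (hA : IsYoung A) (hBinv : IsInvOn0 (Bfun n A) Binv)
    {y l : ℝ} (hy : 0 < y) (hl : 1 ≤ l) :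
    Bfun n A (Binv y / l) ≤ y / l ^ n := by
  obtain ⟨ha0, hay⟩ := hBinv.1 y hy.le
  have hl0 : (0:ℝ) < l := lt_of_lt_of_le one_pos hl
  by_cases hn1 : n = 1
  · have := Bfun_cone hn hA hBinv hy (le_of_lt (one_div_pos.2 hl0)) (by
      rw [div_le_one hl0]; exact hl)
    calc Bfun n A (Binv y / l) = Bfun n A (1 / l * Binv y) := by rw [one_div_mul_eq_div]
      _ ≤ 1 / l * y := this
      _ = y / l ^ n := by rw [hn1, pow_one, one_div_mul_eq_div]
  · rw [Bfun_eq hn1] at hay ⊢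
    have hay' : sSup ((fun τ => τ * Binv y - Efn n A τ) '' Set.Ici 0) = y := hay
    have hbdd : BddAbove ((fun τ => τ * Binv y - Efn n A τ) '' Set.Ici 0) := by
      by_contra hcon
      rw [Real.sSup_of_not_bddAbove hcon] at hay'
      exact absurd hay'.symm (ne_of_gt hy)
    rw [youngConj]
    refine Real.sSup_le ?_ (div_nonneg hy.le (by positivity))
    rintro x ⟨τ, hτ, rfl⟩
    have hEs : Efn n A (l ^ (n-1) * τ) ≤ l ^ n * Efn n A τ := E_scale hn1 hn hA hτ.out hl
    have h2 : l ^ (n-1) * τ * Binv y - Efn n A (l ^ (n-1) * τ) ≤ y := by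
      have := le_csSup hbdd (Set.mem_image_of_mem (fun τ => τ * Binv y - Efn n A τ)
        (Set.mem_Ici.2 (mul_nonneg (by positivity : (0:ℝ) ≤ l ^ (n-1)) hτ.out)))
      rw [hay'] at this
      exact this
    have hln : (0:ℝ) < l ^ n := by positivity
    simp only
    rw [le_div_iff₀ hln]
    have hexp : l ^ n = l ^ (n-1) * l := by
      conv_lhs => rw [show n = (n-1) + 1 by omega]
      rw [pow_succ]
    have hexpand : (τ * (Binv y / l) - Efn n A τ) * l ^ n
        = l ^ (n-1) * τ * Binv y - Efn n A τ * l ^ n := by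
      rw [hexp]; field_simp
    rw [hexpand]
    nlinarith [E_nonneg (A := A) hn1 hn hA hτ.out]

/-- all the needed facts about `Binv`. -/
lemma mkBF (hn : 0 < n) (hA : IsYoung A) (hBinv : IsInvOn0 (Bfun n A) Binv) : BF n Binv := by
  have hB0 : Binv 0 = 0 := by
    have := hBinv.2 0 le_rfl
    rwa [Bfun_zero hn hA] at this
  have hpos : ∀ t, 0 < t → 0 < Binv t := by
    intro t ht
    rcases lt_or_eq_of_le ((hBinv.1 t ht.le).1) with h | h
    · exact h
    · exfalso
      have := (hBinv.1 t ht.le).2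
      rw [← h, Bfun_zero hn hA] at this
      exact absurd this.symm (ne_of_gt ht)
  have hmono : ∀ t₁ t₂, 0 ≤ t₁ → t₁ ≤ t₂ → Binv t₁ ≤ Binv t₂ := by
    intro t₁ t₂ ht₁ h12
    rcases eq_or_lt_of_le ht₁ with h0 | ht₁pos
    · rw [← h0, hB0]
      exact (hBinv.1 t₂ (h0.le.trans h12)).1
    · by_contra hcon
      push_neg at hcon
      have ht₂pos : 0 < t₂ := ht₁pos.trans_le h12
      have hb := hpos t₂ ht₂pos
      have ha := hpos t₁ ht₁pos
      have hμ : Binv t₂ / Binv t₁ < 1 := by rw [div_lt_one ha]; exact hcon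
      have hcone := Bfun_cone hn hA hBinv ht₁pos (le_of_lt (div_pos hb ha)) hμ.le
      rw [div_mul_cancel₀ _ (ne_of_gt ha)] at hcone
      rw [(hBinv.1 t₂ ht₂pos.le).2] at hcone
      nlinarith
  refine ⟨hB0, fun t ht => (hBinv.1 t ht).1, hpos, hmono, ?_, ?_⟩
  · -- superhom
    intro u l hu hl
    have hl0 : (0:ℝ) < l := lt_of_lt_of_le one_pos hl
    rcases eq_or_lt_of_le hu with h0 | hupos
    · rw [← h0, mul_zero, hB0, mul_zero]
    · by_contra hcon
      push_neg at hcon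
      have ha := hpos u hupos
      have hb := hpos (l * u) (by positivity)
      have hμ : Binv u / Binv (l * u) < 1 := by
        rw [div_lt_one hb]; nlinarith
      have hcone := Bfun_cone hn hA hBinv (show 0 < l * u by positivity)
        (le_of_lt (div_pos ha hb)) hμ.le
      rw [div_mul_cancel₀ _ (ne_of_gt hb)] at hcone
      rw [(hBinv.1 u hupos.le).2] at hcone
      have hq : Binv u / Binv (l * u) * (l * u) * Binv (l * u) = Binv u * (l * u) := by
        field_simp
      nlinarith [mul_le_mul_of_nonneg_right hcone hb.le, hq, mul_pos hl0 hupos,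
        mul_pos hupos hb]
  · -- scale
    intro y l hy hl
    have hl0 : (0:ℝ) < l := lt_of_lt_of_le one_pos hl
    have hsc := Bfun_scale hn hA hBinv hy hl
    have hw0 : 0 ≤ Binv y / l := div_nonneg (hpos y hy).le hl0.le
    have hBw : 0 ≤ Bfun n A (Binv y / l) := Bfun_nonneg hn hA hw0
    have := hmono _ _ hBw hsc
    rw [hBinv.2 _ hw0] at this
    rw [div_le_iff₀ hl0] at this
    linarith [this]

end BFacts


namespace BF

variable {n : ℕ} {Binv : ℝ → ℝ}

lemma ratio_le (F : BF n Binv) {r u : ℝ} (hr : 0 < r) (hu : 0 < u) :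
    Binv (r * u) / Binv u ≤ max r 1 := by
  have hBu := F.pos u hu
  rw [div_le_iff₀ hBu]
  rcases le_total r 1 with h | h
  · have h1 : Binv (r * u) ≤ Binv u := F.mono _ _ (by positivity) (by nlinarith)
    calc Binv (r * u) ≤ Binv u := h1
      _ = 1 * Binv u := (one_mul _).symm
      _ ≤ max r 1 * Binv u := by gcongr; exact le_max_right _ _
  · calc Binv (r * u) ≤ r * Binv u := F.superhom u r hu.le h
      _ ≤ max r 1 * Binv u := by gcongr; exact le_max_left _ _

lemma le_ratio (F : BF n Binv) {r u : ℝ} (hr : 0 < r) (hu : 0 < u) :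
    min r 1 ≤ Binv (r * u) / Binv u := by
  have hBu := F.pos u hu
  rw [le_div_iff₀ hBu]
  rcases le_total r 1 with h | h
  · have h2 : Binv u ≤ r⁻¹ * Binv (r * u) := by
      have := F.superhom (r * u) (1/r) (by positivity)
        (by rw [le_div_iff₀ hr]; simpa using h)
      rwa [one_div, inv_mul_cancel_left₀ (ne_of_gt hr)] at this
    have hinv : r * r⁻¹ = 1 := mul_inv_cancel₀ (ne_of_gt hr)
    calc min r 1 * Binv u ≤ r * Binv u := by gcongr; exact min_le_left _ _
      _ ≤ Binv (r * u) := by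
          have h3 := mul_le_mul_of_nonneg_left h2 hr.le
          rw [← mul_assoc, hinv, one_mul] at h3
          exact h3
  · have h2 : Binv u ≤ Binv (r * u) := F.mono _ _ hu.le (by nlinarith)
    calc min r 1 * Binv u ≤ 1 * Binv u := by gcongr; exact min_le_right _ _
      _ ≤ Binv (r * u) := by rw [one_mul]; exact h2

end BF

section JFacts

variable {n : ℕ} {Binv : ℝ → ℝ} {φ' : ℝ → ℝ} {Ji : ℝ → ℝ}

lemma Jfun_zero : Jfun n Binv φ' 0 = 0 := by rw [Jfun, if_pos rfl]

lemma Jfun_eq {s : ℝ} (hs : s ≠ 0) : Jfun n Binv φ' s = s * Binv (φ' s / s ^ n) := by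
  rw [Jfun, if_neg hs]

lemma Jfun_pos (F : BF n Binv) (hpos : ∀ s, 0 < s → 0 < φ' s) {s : ℝ} (hs : 0 < s) :
    0 < Jfun n Binv φ' s := by
  rw [Jfun_eq (ne_of_gt hs)]
  exact mul_pos hs (F.pos _ (div_pos (hpos s hs) (pow_pos hs n)))

lemma Jfun_nonneg (F : BF n Binv) (hpos : ∀ s, 0 < s → 0 < φ' s) {s : ℝ} (hs : 0 ≤ s) :
    0 ≤ Jfun n Binv φ' s := by
  rcases eq_or_lt_of_le hs with rfl | h
  · rw [Jfun_zero]
  · exact (Jfun_pos F hpos h).le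

lemma Jfun_mono (F : BF n Binv) (hpos : ∀ s, 0 < s → 0 < φ' s)
    (hmono : ∀ s t, 0 ≤ s → s ≤ t → φ' s ≤ φ' t)
    {s₁ s₂ : ℝ} (h1 : 0 ≤ s₁) (h12 : s₁ ≤ s₂) :
    Jfun n Binv φ' s₁ ≤ Jfun n Binv φ' s₂ := by
  rcases eq_or_lt_of_le h1 with rfl | h1p
  · rw [Jfun_zero]; exact Jfun_nonneg F hpos (h1.trans h12)
  · have h2p : 0 < s₂ := h1p.trans_le h12
    have hl1 : 1 ≤ s₂ / s₁ := (one_le_div h1p).2 h12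
    have hy1 : 0 < φ' s₁ / s₁ ^ n := div_pos (hpos _ h1p) (pow_pos h1p n)
    have hscale := F.scale _ (s₂ / s₁) hy1 hl1
    have harg : φ' s₁ / s₁ ^ n / (s₂ / s₁) ^ n = φ' s₁ / s₂ ^ n := by
      rw [div_pow]
      field_simp
    rw [harg] at hscale
    have hmono2 : Binv (φ' s₁ / s₂ ^ n) ≤ Binv (φ' s₂ / s₂ ^ n) := by
      refine F.mono _ _ (div_nonneg (hpos _ h1p).le (pow_pos h2p n).le) ?_
      have h5 := hmono _ _ h1p.le h12
      have hp2 : (0:ℝ) < s₂ ^ n := pow_pos h2p n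
      gcongr
    rw [Jfun_eq (ne_of_gt h1p), Jfun_eq (ne_of_gt h2p)]
    calc s₁ * Binv (φ' s₁ / s₁ ^ n) ≤ s₁ * (s₂ / s₁ * Binv (φ' s₁ / s₂ ^ n)) :=
          mul_le_mul_of_nonneg_left hscale h1p.le
      _ = s₂ * Binv (φ' s₁ / s₂ ^ n) := by
          field_simp
      _ ≤ s₂ * Binv (φ' s₂ / s₂ ^ n) := mul_le_mul_of_nonneg_left hmono2 h2p.le

lemma Ji_zero (hInv : IsInvOn0 (Jfun n Binv φ') Ji) : Ji 0 = 0 := by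
  have := hInv.2 0 le_rfl
  rwa [Jfun_zero] at this

lemma Ji_pos (hInv : IsInvOn0 (Jfun n Binv φ') Ji) {t : ℝ} (ht : 0 < t) : 0 < Ji t := by
  rcases eq_or_lt_of_le ((hInv.1 t ht.le).1) with h | h
  · exfalso
    have h2 := (hInv.1 t ht.le).2
    rw [← h, Jfun_zero] at h2
    exact absurd h2 (ne_of_lt ht)
  · exact h

lemma Ji_mono (F : BF n Binv) (hpos : ∀ s, 0 < s → 0 < φ' s)
    (hmono : ∀ s t, 0 ≤ s → s ≤ t → φ' s ≤ φ' t)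
    (hInv : IsInvOn0 (Jfun n Binv φ') Ji)
    {t₁ t₂ : ℝ} (h1 : 0 ≤ t₁) (h12 : t₁ ≤ t₂) : Ji t₁ ≤ Ji t₂ := by
  by_contra hcon
  push_neg at hcon
  have h2 : 0 ≤ t₂ := h1.trans h12
  have hJ := Jfun_mono F hpos hmono (hInv.1 t₂ h2).1 hcon.le
  rw [(hInv.1 t₂ h2).2, (hInv.1 t₁ h1).2] at hJ
  have heq : t₁ = t₂ := le_antisymm h12 hJ
  rw [heq] at hcon
  exact lt_irrefl _ hcon

lemma Ji_tendsto (F : BF n Binv) (hpos : ∀ s, 0 < s → 0 < φ' s)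
    (hmono : ∀ s t, 0 ≤ s → s ≤ t → φ' s ≤ φ' t)
    (hInv : IsInvOn0 (Jfun n Binv φ') Ji) :
    Tendsto Ji (𝓝[>] (0:ℝ)) (𝓝[>] (0:ℝ)) := by
  rw [tendsto_nhdsWithin_iff]
  constructor
  · refine tendsto_order.2 ⟨?_, ?_⟩
    · intro a ha
      filter_upwards [self_mem_nhdsWithin] with t ht
      exact lt_of_lt_of_le ha ((hInv.1 t (le_of_lt ht)).1)
    · intro b hb
      have hb2 : 0 < b/2 := half_pos hb
      have hJb : 0 < Jfun n Binv φ' (b/2) := Jfun_pos F hpos hb2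
      filter_upwards [Ioo_mem_nhdsGT_of_mem (Set.mem_Ico.2 ⟨le_rfl, hJb⟩)] with t ht
      have h1 : Ji t ≤ Ji (Jfun n Binv φ' (b/2)) :=
        Ji_mono F hpos hmono hInv ht.1.le ht.2.le
      rw [hInv.2 (b/2) hb2.le] at h1
      linarith
  · filter_upwards [self_mem_nhdsWithin] with t ht
    exact Ji_pos hInv ht

end JFacts

end Aux18

/-- Lemma `aux2`. -/
theorem statement18
    (n : ℕ) (hn : 0 < n)
    (A : ℝ → ℝ) (hA : IsYoung A) (hC : CondC n A) (hC0 : CondC0 n A)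
    (φ : ℝ → ℝ) (hφ : IsGauge n φ)
    (hphi_inf : Tendsto (fun r => φ r / r ^ n) (𝓝[>] (0:ℝ)) atTop)
    (Binv : ℝ → ℝ) (hBinv : IsInvOn0 (Bfun n A) Binv)
    (Jinv : ℝ → ℝ) (hJinv : IsInvOn0 (Jfun n Binv φ) Jinv)
    (ψ : ℝ → ℝ) (hψ : ∀ r, ψ r = φ (Jinv r))
    (Jrinv : ℝ → ℝ → ℝ) (hJrinv : ∀ r, 0 < r → IsInvOn0 (Jr n Binv φ r) (Jrinv r)) :
    ∀ r, 0 < r →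
      (ENNReal.ofReal (1 / rightLim (Theta0 ψ) (ThetaInf Binv r)) ≤
        Filter.liminf (fun t => ENNReal.ofReal (φ (Jrinv r t) / ψ t)) (𝓝[>] (0:ℝ))) ∧
      (∀ t, 0 < t →
        1 / rightLim (ThetaSup ψ) (ThetaSup Binv r) ≤ φ (Jrinv r t) / ψ t) := by
  classical
  have F := Aux18.mkBF hn hA hBinv
  have hφmono : ∀ s t : ℝ, 0 ≤ s → s ≤ t → φ s ≤ φ t := fun s t hs hst =>
    hφ.strictMonoOn.monotoneOn (Set.mem_Ici.2 hs) (Set.mem_Ici.2 (hs.trans hst)) hst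
  have hφpos : ∀ s : ℝ, 0 < s → 0 < φ s := by
    intro s hs
    have := hφ.strictMonoOn (Set.self_mem_Ici) (Set.mem_Ici.2 hs.le) hs
    rwa [hφ.zero] at this
  have hψmono : ∀ t₁ t₂ : ℝ, 0 ≤ t₁ → t₁ ≤ t₂ → ψ t₁ ≤ ψ t₂ := by
    intro t₁ t₂ h1 h12
    rw [hψ, hψ]
    exact hφmono _ _ (hJinv.1 t₁ h1).1 (Aux18.Ji_mono F hφpos hφmono hJinv h1 h12)
  have hψpos : ∀ t : ℝ, 0 < t → 0 < ψ t := by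
    intro t ht
    rw [hψ]
    exact hφpos _ (Aux18.Ji_pos hJinv ht)
  intro r hr
  have hJrF : IsInvOn0 (Jfun n Binv (fun s => r * φ s)) (Jrinv r) := hJrinv r hr
  have hφ'pos : ∀ s : ℝ, 0 < s → 0 < r * φ s := fun s hs => mul_pos hr (hφpos s hs)
  have hφ'mono : ∀ s t : ℝ, 0 ≤ s → s ≤ t → r * φ s ≤ r * φ t :=
    fun s t hs hst => mul_le_mul_of_nonneg_left (hφmono s t hs hst) hr.le
  -- decomposition of `t` for `t > 0`
  have hdecomp : ∀ t : ℝ, 0 < t → 0 < Jrinv r t ∧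
      t = (Binv (r * (φ (Jrinv r t) / (Jrinv r t) ^ n)) /
            Binv (φ (Jrinv r t) / (Jrinv r t) ^ n)) * Jfun n Binv φ (Jrinv r t) := by
    intro t ht
    obtain ⟨hs0, hst⟩ := hJrF.1 t ht.le
    have hsne : Jrinv r t ≠ 0 := by
      intro h0
      rw [h0, Aux18.Jfun_zero] at hst
      exact absurd hst (ne_of_lt ht)
    have hspos : 0 < Jrinv r t := lt_of_le_of_ne hs0 (Ne.symm hsne)
    refine ⟨hspos, ?_⟩
    have hy : 0 < φ (Jrinv r t) / (Jrinv r t) ^ n :=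
      div_pos (hφpos _ hspos) (pow_pos hspos n)
    have hBy : 0 < Binv (φ (Jrinv r t) / (Jrinv r t) ^ n) := F.pos _ hy
    rw [Aux18.Jfun_eq hsne] at hst
    rw [mul_div_assoc] at hst
    have hrhs : (Binv (r * (φ (Jrinv r t) / (Jrinv r t) ^ n)) /
        Binv (φ (Jrinv r t) / (Jrinv r t) ^ n)) * Jfun n Binv φ (Jrinv r t)
        = Jrinv r t * Binv (r * (φ (Jrinv r t) / (Jrinv r t) ^ n)) := by
      rw [Aux18.Jfun_eq hsne]
      field_simp
    rw [hrhs]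
    exact hst.symm
  constructor
  · -- liminf part
    rcases le_or_gt (rightLim (Theta0 ψ) (ThetaInf Binv r)) 0 with hR | hR
    · rw [show ENNReal.ofReal (1 / rightLim (Theta0 ψ) (ThetaInf Binv r)) = 0 from
        ENNReal.ofReal_eq_zero.2 (one_div_nonpos.2 hR)]
      exact zero_le
    · have hsmap : Tendsto (Jrinv r) (𝓝[>] (0:ℝ)) (𝓝[>] (0:ℝ)) :=
        Aux18.Ji_tendsto F hφ'pos hφ'mono hJrF
      have hymap : Tendsto (fun t => φ (Jrinv r t) / (Jrinv r t) ^ n)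
          (𝓝[>] (0:ℝ)) atTop := hphi_inf.comp hsmap
      have hbddB : IsBoundedUnder (· ≤ ·) atTop (fun u => Binv (r * u) / Binv u) :=
        ⟨max r 1, eventually_map.2 ((eventually_gt_atTop 0).mono fun u hu =>
          Aux18.BF.ratio_le F hr hu)⟩
      have hTIpos : 0 < ThetaInf Binv r := by
        have hle : min r 1 ≤ ThetaInf Binv r := by
          refine Filter.le_limsup_of_frequently_le ?_ hbddB
          exact ((eventually_gt_atTop 0).mono fun u hu =>
            Aux18.BF.le_ratio F hr hu).frequently
        exact lt_of_lt_of_le (lt_min hr one_pos) hle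
      have himg_ne : ((Theta0 ψ) '' Set.Ioi (ThetaInf Binv r)).Nonempty :=
        ⟨_, ⟨ThetaInf Binv r + 1, Set.mem_Ioi.2 (lt_add_one _), rfl⟩⟩
      have hbb : BddBelow ((Theta0 ψ) '' Set.Ioi (ThetaInf Binv r)) := by
        by_contra hcon
        rw [rightLim, Real.sInf_of_not_bddBelow hcon] at hR
        exact lt_irrefl _ hR
      have main : ∀ c, ThetaInf Binv r < c → ∀ ε : ℝ, 0 < ε →
          ENNReal.ofReal (1 / (Theta0 ψ c + ε)) ≤
            Filter.liminf (fun t => ENNReal.ofReal (φ (Jrinv r t) / ψ t)) (𝓝[>] (0:ℝ)) := by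
        intro c hc ε hε
        have hcpos : 0 < c := hTIpos.trans hc
        have hPc : rightLim (Theta0 ψ) (ThetaInf Binv r) ≤ Theta0 ψ c :=
          csInf_le hbb ⟨c, hc, rfl⟩
        have hPpos : 0 < Theta0 ψ c := hR.trans_le hPc
        have hbdd_c : IsBoundedUnder (· ≤ ·) (𝓝[>] (0:ℝ))
            (fun v => ψ (c * v) / ψ v) := by
          by_contra hcon
          have hempty : {a : ℝ | ∀ᶠ v in 𝓝[>] (0:ℝ), ψ (c * v) / ψ v ≤ a} = ∅ := by
            rw [Set.eq_empty_iff_forall_notMem]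
            intro a ha
            exact hcon ⟨a, eventually_map.2 ha⟩
          rw [Theta0, Filter.limsup_eq, hempty, Real.sInf_empty] at hPpos
          exact lt_irrefl _ hPpos
        have hlt1 : Filter.limsup (fun v => ψ (c * v) / ψ v) (𝓝[>] (0:ℝ))
            < Theta0 ψ c + ε := lt_add_of_pos_right _ hε
        have hev1 : ∀ᶠ v in 𝓝[>] (0:ℝ), ψ (c * v) / ψ v < Theta0 ψ c + ε :=
          Filter.eventually_lt_of_limsup_lt hlt1 hbdd_c
        have hlt2 : Filter.limsup (fun u => Binv (r * u) / Binv u) atTop < c := hc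
        have hevB : ∀ᶠ u in atTop, Binv (r * u) / Binv u < c :=
          Filter.eventually_lt_of_limsup_lt hlt2 hbddB
        have hevq : ∀ᶠ t in 𝓝[>] (0:ℝ),
            Binv (r * (φ (Jrinv r t) / (Jrinv r t) ^ n)) /
              Binv (φ (Jrinv r t) / (Jrinv r t) ^ n) < c := hymap.eventually hevB
        have humap : Tendsto (fun t => Jfun n Binv φ (Jrinv r t))
            (𝓝[>] (0:ℝ)) (𝓝[>] (0:ℝ)) := by
          have hminpos : 0 < min r 1 := lt_min hr one_pos
          rw [tendsto_nhdsWithin_iff]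
          constructor
          · apply squeeze_zero' (g := fun t => t / min r 1)
            · filter_upwards [self_mem_nhdsWithin] with t ht
              exact (Aux18.Jfun_pos F hφpos ((hdecomp t ht).1)).le
            · filter_upwards [self_mem_nhdsWithin] with t ht
              obtain ⟨hspos, hteq⟩ := hdecomp t ht
              have hy : 0 < φ (Jrinv r t) / (Jrinv r t) ^ n :=
                div_pos (hφpos _ hspos) (pow_pos hspos n)
              have hqmin : min r 1 ≤ Binv (r * (φ (Jrinv r t) / (Jrinv r t) ^ n)) /
                  Binv (φ (Jrinv r t) / (Jrinv r t) ^ n) := Aux18.BF.le_ratio F hr hy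
              have hJpos : 0 < Jfun n Binv φ (Jrinv r t) := Aux18.Jfun_pos F hφpos hspos
              rw [le_div_iff₀ hminpos]
              nlinarith [mul_le_mul_of_nonneg_left hqmin hJpos.le]
            · have h0 : Tendsto (fun t : ℝ => t / min r 1) (𝓝 (0:ℝ))
                  (𝓝 (0 / min r 1)) := tendsto_id.div_const _
              rw [zero_div] at h0
              exact h0.mono_left nhdsWithin_le_nhds
          · filter_upwards [self_mem_nhdsWithin] with t ht
            exact Aux18.Jfun_pos F hφpos ((hdecomp t ht).1)
        have hev2 : ∀ᶠ t in 𝓝[>] (0:ℝ),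
            ψ (c * Jfun n Binv φ (Jrinv r t)) / ψ (Jfun n Binv φ (Jrinv r t))
              < Theta0 ψ c + ε := humap.eventually hev1
        have hptwise : ∀ᶠ t in 𝓝[>] (0:ℝ),
            1 / (Theta0 ψ c + ε) ≤ φ (Jrinv r t) / ψ t := by
          filter_upwards [self_mem_nhdsWithin, hevq, hev2] with t ht hq hc2
          obtain ⟨hspos, hteq⟩ := hdecomp t ht
          have hJpos : 0 < Jfun n Binv φ (Jrinv r t) := Aux18.Jfun_pos F hφpos hspos
          have hψJ : 0 < ψ (Jfun n Binv φ (Jrinv r t)) := hψpos _ hJpos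
          have hψcJ : 0 < ψ (c * Jfun n Binv φ (Jrinv r t)) :=
            hψpos _ (mul_pos hcpos hJpos)
          have hψt : 0 < ψ t := hψpos t ht
          have hφψ : ψ (Jfun n Binv φ (Jrinv r t)) = φ (Jrinv r t) := by
            rw [hψ, hJinv.2 _ hspos.le]
          have htle : t ≤ c * Jfun n Binv φ (Jrinv r t) := by
            nth_rewrite 1 [hteq]
            exact mul_le_mul_of_nonneg_right hq.le hJpos.le
          have hψle : ψ t ≤ ψ (c * Jfun n Binv φ (Jrinv r t)) :=
            hψmono t _ ht.le htle
          calc 1 / (Theta0 ψ c + ε)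
              ≤ 1 / (ψ (c * Jfun n Binv φ (Jrinv r t)) / ψ (Jfun n Binv φ (Jrinv r t))) :=
                one_div_le_one_div_of_le (div_pos hψcJ hψJ) hc2.le
            _ = ψ (Jfun n Binv φ (Jrinv r t)) / ψ (c * Jfun n Binv φ (Jrinv r t)) :=
                one_div_div _ _
            _ ≤ ψ (Jfun n Binv φ (Jrinv r t)) / ψ t :=
                div_le_div_of_nonneg_left hψJ.le hψt hψle
            _ = φ (Jrinv r t) / ψ t := by rw [hφψ]
        rw [Filter.liminf_eq]
        exact le_sSup (hptwise.mono fun t h => ENNReal.ofReal_le_ofReal h)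
      -- final assembly
      apply le_of_forall_lt
      intro ν hν
      have hν_ne : ν ≠ ⊤ := ne_top_of_lt hν
      have hx : ν.toReal < 1 / rightLim (Theta0 ψ) (ThetaInf Binv r) :=
        (ENNReal.lt_ofReal_iff_toReal_lt hν_ne).1 hν
      obtain ⟨x', hxx', hx'⟩ := exists_between hx
      have hx'pos : 0 < x' := lt_of_le_of_lt ENNReal.toReal_nonneg hxx'
      have hinv1 : rightLim (Theta0 ψ) (ThetaInf Binv r) < 1 / x' := by
        rw [lt_div_iff₀ hx'pos]
        rw [lt_div_iff₀ hR] at hx'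
        linarith
      set R := rightLim (Theta0 ψ) (ThetaInf Binv r) with hRdef
      have hδpos : 0 < (1 / x' - R) / 2 := half_pos (sub_pos.2 hinv1)
      have hsInflt : sInf ((Theta0 ψ) '' Set.Ioi (ThetaInf Binv r)) < R + (1 / x' - R) / 2 := by
        rw [← rightLim, ← hRdef]
        exact lt_add_of_pos_right _ hδpos
      obtain ⟨b, ⟨c, hc, rfl⟩, hbδ⟩ := exists_lt_of_csInf_lt himg_ne hsInflt
      have hRc : R ≤ Theta0 ψ c := csInf_le hbb ⟨c, hc, rfl⟩
      have hPpos : 0 < Theta0 ψ c + (1 / x' - R) / 2 := by linarith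
      have hsum : Theta0 ψ c + (1 / x' - R) / 2 < 1 / x' := by linarith
      have hx'le : x' ≤ 1 / (Theta0 ψ c + (1 / x' - R) / 2) := by
        rw [le_div_iff₀ hPpos]
        rw [lt_div_iff₀ hx'pos] at hsum
        nlinarith
      calc ν = ENNReal.ofReal ν.toReal := (ENNReal.ofReal_toReal hν_ne).symm
        _ < ENNReal.ofReal x' := (ENNReal.ofReal_lt_ofReal_iff hx'pos).2 hxx'
        _ ≤ ENNReal.ofReal (1 / (Theta0 ψ c + (1 / x' - R) / 2)) :=
            ENNReal.ofReal_le_ofReal hx'le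
        _ ≤ _ := main c hc _ hδpos
  · -- pointwise part
    intro t ht
    obtain ⟨hspos, hteq⟩ := hdecomp t ht
    have hy : 0 < φ (Jrinv r t) / (Jrinv r t) ^ n :=
      div_pos (hφpos _ hspos) (pow_pos hspos n)
    have hBy : 0 < Binv (φ (Jrinv r t) / (Jrinv r t) ^ n) := F.pos _ hy
    have hBry : 0 < Binv (r * (φ (Jrinv r t) / (Jrinv r t) ^ n)) :=
      F.pos _ (mul_pos hr hy)
    have hq_pos : 0 < Binv (r * (φ (Jrinv r t) / (Jrinv r t) ^ n)) /
        Binv (φ (Jrinv r t) / (Jrinv r t) ^ n) := div_pos hBry hBy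
    have hJs_pos : 0 < Jfun n Binv φ (Jrinv r t) := Aux18.Jfun_pos F hφpos hspos
    have hφs_pos : 0 < φ (Jrinv r t) := hφpos _ hspos
    have hψt_pos : 0 < ψ t := hψpos t ht
    have hψJ : 0 < ψ (Jfun n Binv φ (Jrinv r t)) := hψpos _ hJs_pos
    have hφψ : ψ (Jfun n Binv φ (Jrinv r t)) = φ (Jrinv r t) := by
      rw [hψ, hJinv.2 _ hspos.le]
    have hbdd : BddAbove ((fun u => Binv (r * u) / Binv u) '' Set.Ioi 0) := by
      refine ⟨max r 1, ?_⟩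
      rintro x ⟨u, hu, rfl⟩
      exact Aux18.BF.ratio_le F hr hu
    have hqΘ : Binv (r * (φ (Jrinv r t) / (Jrinv r t) ^ n)) /
        Binv (φ (Jrinv r t) / (Jrinv r t) ^ n) ≤ ThetaSup Binv r :=
      le_csSup hbdd ⟨_, hy, rfl⟩
    have hΘpos : 0 < ThetaSup Binv r := lt_of_lt_of_le hq_pos hqΘ
    rcases le_or_gt (rightLim (ThetaSup ψ) (ThetaSup Binv r)) 0 with hR | hR
    · exact le_trans (one_div_nonpos.2 hR) (div_nonneg hφs_pos.le hψt_pos.le)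
    · have himg_ne : ((ThetaSup ψ) '' Set.Ioi (ThetaSup Binv r)).Nonempty :=
        ⟨_, ⟨ThetaSup Binv r + 1, Set.mem_Ioi.2 (lt_add_one _), rfl⟩⟩
      have hbb : BddBelow ((ThetaSup ψ) '' Set.Ioi (ThetaSup Binv r)) := by
        by_contra hcon
        rw [rightLim, Real.sInf_of_not_bddBelow hcon] at hR
        exact lt_irrefl _ hR
      have key : ∀ c, ThetaSup Binv r < c → ψ t / φ (Jrinv r t) ≤ ThetaSup ψ c := by
        intro c hc
        have hcpos : 0 < c := hΘpos.trans hc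
        have hRc : rightLim (ThetaSup ψ) (ThetaSup Binv r) ≤ ThetaSup ψ c :=
          csInf_le hbb ⟨c, hc, rfl⟩
        have hTc_pos : 0 < ThetaSup ψ c := hR.trans_le hRc
        have hbA : BddAbove ((fun u => ψ (c * u) / ψ u) '' Set.Ioi 0) := by
          by_contra hcon
          rw [ThetaSup, Real.sSup_of_not_bddAbove hcon] at hTc_pos
          exact lt_irrefl _ hTc_pos
        have helem : ψ (c * Jfun n Binv φ (Jrinv r t)) / ψ (Jfun n Binv φ (Jrinv r t))
            ≤ ThetaSup ψ c := le_csSup hbA ⟨_, hJs_pos, rfl⟩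
        have htle : t ≤ c * Jfun n Binv φ (Jrinv r t) := by
          nth_rewrite 1 [hteq]
          exact mul_le_mul_of_nonneg_right (hqΘ.trans hc.le) hJs_pos.le
        have hψle : ψ t ≤ ψ (c * Jfun n Binv φ (Jrinv r t)) := hψmono t _ ht.le htle
        calc ψ t / φ (Jrinv r t) = ψ t / ψ (Jfun n Binv φ (Jrinv r t)) := by rw [hφψ]
          _ ≤ ψ (c * Jfun n Binv φ (Jrinv r t)) / ψ (Jfun n Binv φ (Jrinv r t)) := by
              gcongr
          _ ≤ ThetaSup ψ c := helem
      have hfin : ψ t / φ (Jrinv r t) ≤ rightLim (ThetaSup ψ) (ThetaSup Binv r) := by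
        rw [rightLim]
        refine le_csInf himg_ne ?_
        rintro b ⟨c, hc, rfl⟩
        exact key c hc
      have hratio_pos : 0 < ψ t / φ (Jrinv r t) := div_pos hψt_pos hφs_pos
      calc 1 / rightLim (ThetaSup ψ) (ThetaSup Binv r) ≤ 1 / (ψ t / φ (Jrinv r t)) :=
            one_div_le_one_div_of_le hratio_pos hfin
        _ = φ (Jrinv r t) / ψ t := one_div_div _ _
end
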